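/- arXiv:2003.10105 — 10 statements merged into one kernel-verified Lean document; each statement's English description precedes it below -/
import Mathlib

section
/- Let 𝒟 be a k-linear rigid symmetric monoidal category and X an object with dual X⁰. Define ℰ_X : X⁰ ⊗ X ⊗ X⁰ ⊗ X → X⁰ ⊗ X as the difference (ev_X ⊗ id_{X⁰⊗X}) − (id_{X⁰⊗X} ⊗ ev_X). Then X ⊗ ℰ_X ⊗ X⁰ is a split morphism, i.e., the object X ⊗ X⁰ splits ℰ_X. -/
open CategoryTheory CategoryTheory.Limits CategoryTheory.MonoidalCategory

universe v u

/-- A morphism `f` is split if there is `g` with `f ∘ g ∘ f = f`. -/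
def IsSplit {C : Type u} [Category.{v} C] {X Y : C} (f : X ⟶ Y) : Prop :=
  ∃ g : Y ⟶ X, f ≫ g ≫ f = f

/-- The sequence `X₂ ⟶ X₁ ⟶ X₀ ⟶ 0` is exact, i.e. `q` is a cokernel of `p`. -/
def IsCokernelSeq {C : Type u} [Category.{v} C] [Preadditive C] {X₂ X₁ X₀ : C}
    (p : X₂ ⟶ X₁) (q : X₁ ⟶ X₀) : Prop :=
  p ≫ q = 0 ∧ ∀ ⦃A : C⦄ (h : X₁ ⟶ A), p ≫ h = 0 → ∃! t : X₀ ⟶ A, q ≫ t = h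

/-- The sequence `0 ⟶ X₀ ⟶ X₁ ⟶ X₂` is exact, i.e. `i` is a kernel of `p`. -/
def IsKernelSeq {C : Type u} [Category.{v} C] [Preadditive C] {X₀ X₁ X₂ : C}
    (i : X₀ ⟶ X₁) (p : X₁ ⟶ X₂) : Prop :=
  i ≫ p = 0 ∧ ∀ ⦃A : C⦄ (h : A ⟶ X₁), h ≫ p = 0 → ∃! t : A ⟶ X₀, t ≫ i = h

/-- The morphism `ℰ_X = ev_X ⊗ id_{X⁰⊗X} − id_{X⁰⊗X} ⊗ ev_X`. -/
def calE {C : Type u} [Category.{v} C] [Preadditive C] [MonoidalCategory C]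
    (X Xd : C) [ExactPairing X Xd] : (Xd ⊗ X) ⊗ (Xd ⊗ X) ⟶ Xd ⊗ X :=
  (ε_ X Xd ▷ (Xd ⊗ X)) ≫ (λ_ (Xd ⊗ X)).hom -
    ((Xd ⊗ X) ◁ ε_ X Xd) ≫ (ρ_ (Xd ⊗ X)).hom

/-- `X` (with chosen dual `Xd`) is strongly faithful: `ev_X` is the cokernel of `ℰ_X`. -/
def StronglyFaithful {C : Type u} [Category.{v} C] [Preadditive C]
    [MonoidalCategory C] (X Xd : C) [ExactPairing X Xd] : Prop :=
  IsCokernelSeq (calE X Xd) (ε_ X Xd)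

section Aux

variable {C : Type u} [Category.{v} C] [Preadditive C] [MonoidalCategory C]
  [MonoidalPreadditive C] (X Xd : C) [ExactPairing X Xd]

omit [MonoidalPreadditive C] in
lemma calE_eval : calE X Xd ≫ ε_ X Xd = 0 := by
  simp only [calE, Preadditive.sub_comp, Category.assoc]
  rw [← leftUnitor_naturality (ε_ X Xd), ← rightUnitor_naturality (ε_ X Xd)]
  rw [whisker_exchange_assoc]
  simp [← unitors_equal]

lemma whiskerLeft_sub' (P : C) {Q R : C} (f g : Q ⟶ R) :
    P ◁ (f - g) = P ◁ f - P ◁ g := by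
  rw [eq_sub_iff_add_eq, ← MonoidalPreadditive.whiskerLeft_add, sub_add_cancel]

lemma key {Y : C} (s : Y ⟶ Y ⊗ (Xd ⊗ X))
    (hs : s ≫ (Y ◁ ε_ X Xd) ≫ (ρ_ Y).hom = 𝟙 Y) :
    (Y ◁ calE X Xd) ≫ ((s ▷ (Xd ⊗ X)) ≫ (α_ Y (Xd ⊗ X) (Xd ⊗ X)).hom) ≫ (Y ◁ calE X Xd)
      = Y ◁ calE X Xd := by
  have h1 : ((s ▷ (Xd ⊗ X)) ≫ (α_ Y (Xd ⊗ X) (Xd ⊗ X)).hom) ≫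
      (Y ◁ ((ε_ X Xd ▷ (Xd ⊗ X)) ≫ (λ_ (Xd ⊗ X)).hom)) = 𝟙 _ := by
    simp only [MonoidalCategory.whiskerLeft_comp, Category.assoc]
    rw [← associator_naturality_middle_assoc, MonoidalCategory.triangle]
    simp only [← comp_whiskerRight, Category.assoc]
    rw [hs, id_whiskerRight]
  have h2 : ((s ▷ (Xd ⊗ X)) ≫ (α_ Y (Xd ⊗ X) (Xd ⊗ X)).hom) ≫
      (Y ◁ (((Xd ⊗ X) ◁ ε_ X Xd) ≫ (ρ_ (Xd ⊗ X)).hom))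
      = ((Y ◁ ε_ X Xd) ≫ (ρ_ Y).hom) ≫ s := by
    simp only [MonoidalCategory.whiskerLeft_comp, Category.assoc]
    rw [← associator_naturality_right_assoc, whiskerLeft_rightUnitor,
      Iso.hom_inv_id_assoc]
    rw [← whisker_exchange_assoc, rightUnitor_naturality]
  have h3 : (Y ◁ calE X Xd) ≫ (Y ◁ ε_ X Xd) = 0 := by
    rw [← MonoidalCategory.whiskerLeft_comp, calE_eval]; simp
  calc (Y ◁ calE X Xd) ≫ ((s ▷ (Xd ⊗ X)) ≫ (α_ Y (Xd ⊗ X) (Xd ⊗ X)).hom) ≫ (Y ◁ calE X Xd)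
      = (Y ◁ calE X Xd) ≫
        (((s ▷ (Xd ⊗ X)) ≫ (α_ Y (Xd ⊗ X) (Xd ⊗ X)).hom) ≫ (Y ◁ calE X Xd)) := by
        rw [Category.assoc]
    _ = (Y ◁ calE X Xd) ≫ (𝟙 _ - ((Y ◁ ε_ X Xd) ≫ (ρ_ Y).hom) ≫ s) := by
        rw [show Y ◁ calE X Xd = Y ◁ ((ε_ X Xd ▷ (Xd ⊗ X)) ≫ (λ_ (Xd ⊗ X)).hom) -
            Y ◁ (((Xd ⊗ X) ◁ ε_ X Xd) ≫ (ρ_ (Xd ⊗ X)).hom) by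
          rw [calE, whiskerLeft_sub']]
        rw [Preadditive.comp_sub, h1, h2]
    _ = Y ◁ calE X Xd := by
        rw [Preadditive.comp_sub, Category.comp_id]
        rw [← Category.assoc, ← Category.assoc, h3]
        simp

section
variable [BraidedCategory C]

/-- Insertion of a coevaluation copy of `Xd ⊗ X` to the right of `X`. -/
def s1 : X ⟶ X ⊗ (Xd ⊗ X) :=
  (λ_ X).inv ≫ (η_ X Xd ▷ X) ≫ (α_ X Xd X).hom

omit [Preadditive C] [MonoidalPreadditive C] [BraidedCategory C] in
lemma hs1 : s1 X Xd ≫ (X ◁ ε_ X Xd) ≫ (ρ_ X).hom = 𝟙 X := by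
  simp [s1]

/-- Insertion of a coevaluation copy of `Xd ⊗ X` to the right of `X ⊗ Xd`. -/
def s2 : (X ⊗ Xd) ⟶ (X ⊗ Xd) ⊗ (Xd ⊗ X) :=
  (s1 X Xd ▷ Xd) ≫ (α_ X (Xd ⊗ X) Xd).hom ≫ (X ◁ (β_ (Xd ⊗ X) Xd).hom) ≫
    (α_ X Xd (Xd ⊗ X)).inv

omit [Preadditive C] [MonoidalPreadditive C] in
lemma hs2 : s2 X Xd ≫ ((X ⊗ Xd) ◁ ε_ X Xd) ≫ (ρ_ (X ⊗ Xd)).hom = 𝟙 (X ⊗ Xd) := by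
  rw [s2]
  simp only [Category.assoc]
  rw [← associator_inv_naturality_right_assoc, ← whiskerLeft_rightUnitor]
  simp only [← MonoidalCategory.whiskerLeft_comp, Category.assoc]
  rw [← BraidedCategory.braiding_naturality_left_assoc,
    braiding_rightUnitor]
  simp only [MonoidalCategory.whiskerLeft_comp]
  rw [← associator_naturality_middle_assoc, MonoidalCategory.triangle]
  simp only [← comp_whiskerRight, Category.assoc]
  rw [hs1, id_whiskerRight]

end

end Aux

/-- The morphism `X ⊗ ℰ_X ⊗ X⁰` is split; i.e. the object `X ⊗ X⁰`
splits `ℰ_X`. -/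
theorem stmt4 {k : Type*} [Field k] {C : Type u} [Category.{v} C] [Preadditive C]
    [Linear k C] [MonoidalCategory C] [SymmetricCategory C] [MonoidalPreadditive C]
    [MonoidalLinear k C] [RigidCategory C]
    (X Xd : C) [ExactPairing X Xd] :
    IsSplit ((X ◁ calE X Xd) ▷ Xd) ∧ IsSplit ((X ⊗ Xd) ◁ calE X Xd) := by
  constructor
  · refine ⟨((s1 X Xd ▷ (Xd ⊗ X)) ≫ (α_ X (Xd ⊗ X) (Xd ⊗ X)).hom) ▷ Xd, ?_⟩
    simp only [← comp_whiskerRight, Category.assoc]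
    rw [← Category.assoc, ← Category.assoc]
    congr 1
    simpa only [Category.assoc] using key X Xd (s1 X Xd) (hs1 X Xd)
  · exact ⟨(s2 X Xd ▷ (Xd ⊗ X)) ≫ (α_ (X ⊗ Xd) (Xd ⊗ X) (Xd ⊗ X)).hom,
      key X Xd (s2 X Xd) (hs2 X Xd)⟩
end

section
/- In a tensor category (a k-linear abelian rigid symmetric monoidal category with End(𝟙) = k), an object X is projective if and only if X is injective, if and only if X ⊗ f is split for every morphism f. -/
open CategoryTheory CategoryTheory.Limits CategoryTheory.MonoidalCategory

universe v u

section Aux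

variable {C : Type u} [Category.{v} C] [Abelian C] [MonoidalCategory C]
  [MonoidalPreadditive C] [RigidCategory C]

namespace Stmt5Aux

lemma preservesColimits_tensorLeft (Y : C) :
    PreservesColimitsOfSize.{0, 0} (tensorLeft Y) :=
  (tensorLeftAdjunction (ᘁY) Y).leftAdjoint_preservesColimits

lemma preservesLimits_tensorLeft (Y : C) :
    PreservesLimitsOfSize.{0, 0} (tensorLeft Y) :=
  (tensorLeftAdjunction Y (Yᘁ)).rightAdjoint_preservesLimits

lemma preservesColimits_tensorRight (Y : C) :
    PreservesColimitsOfSize.{0, 0} (tensorRight Y) :=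
  (tensorRightAdjunction Y (Yᘁ)).leftAdjoint_preservesColimits

lemma preservesLimits_tensorRight (Y : C) :
    PreservesLimitsOfSize.{0, 0} (tensorRight Y) :=
  (tensorRightAdjunction (ᘁY) Y).rightAdjoint_preservesLimits

lemma epi_whiskerLeft (Y : C) {A B : C} (f : A ⟶ B) [Epi f] : Epi (Y ◁ f) := by
  haveI := preservesColimits_tensorLeft (C := C) Y
  haveI : (tensorLeft Y).PreservesEpimorphisms := inferInstance
  exact (tensorLeft Y).map_epi f

lemma mono_whiskerLeft (Y : C) {A B : C} (f : A ⟶ B) [Mono f] : Mono (Y ◁ f) := by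
  haveI := preservesLimits_tensorLeft (C := C) Y
  haveI : (tensorLeft Y).PreservesMonomorphisms := inferInstance
  exact (tensorLeft Y).map_mono f

lemma projective_tensor {X : C} (hX : Projective X) (Y : C) : Projective (X ⊗ Y) := by
  haveI := preservesColimits_tensorRight (C := C) (Yᘁ)
  haveI : (tensorRight (Yᘁ)).PreservesEpimorphisms := inferInstance
  exact (tensorRightAdjunction Y (Yᘁ)).map_projective X hX

lemma injective_tensor {X : C} (hX : Injective X) (Y : C) : Injective (X ⊗ Y) := by
  haveI := preservesLimits_tensorRight (C := C) (ᘁY)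
  haveI : (tensorRight (ᘁY)).PreservesMonomorphisms := inferInstance
  exact (tensorRightAdjunction (ᘁY) Y).map_injective X hX

/-- A mono with projective cokernel is split. -/
lemma splitMono_of_projective_cokernel {K B : C} (m : K ⟶ B) [Mono m]
    (hQ : Projective (cokernel m)) : ∃ r : B ⟶ K, m ≫ r = 𝟙 K := by
  haveI := hQ
  have hu : Projective.factorThru (𝟙 (cokernel m)) (cokernel.π m) ≫ cokernel.π m =
      𝟙 (cokernel m) := Projective.factorThru_comp _ _
  have ht : (𝟙 B - cokernel.π m ≫ Projective.factorThru (𝟙 (cokernel m)) (cokernel.π m)) ≫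
      cokernel.π m = 0 := by
    simp [Preadditive.sub_comp, Category.assoc, hu]
  refine ⟨Abelian.monoLift m _ ht, ?_⟩
  rw [← cancel_mono m, Category.assoc, Abelian.monoLift_comp]
  simp [Preadditive.comp_sub, cokernel.condition_assoc]

/-- An epi with injective kernel is split. -/
lemma splitEpi_of_injective_kernel {A I : C} (e : A ⟶ I) [Epi e]
    (hK : Injective (kernel e)) : ∃ s : I ⟶ A, s ≫ e = 𝟙 I := by
  haveI := hK
  have hv : kernel.ι e ≫ Injective.factorThru (𝟙 (kernel e)) (kernel.ι e) = 𝟙 (kernel e) :=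
    Injective.comp_factorThru _ _
  have ht : kernel.ι e ≫ (𝟙 A - Injective.factorThru (𝟙 (kernel e)) (kernel.ι e) ≫
      kernel.ι e) = 0 := by
    simp only [Preadditive.comp_sub, Category.comp_id, ← Category.assoc, hv]
    simp
  refine ⟨Abelian.epiDesc e _ ht, ?_⟩
  rw [← cancel_epi e, ← Category.assoc, Abelian.comp_epiDesc]
  simp [Preadditive.sub_comp, Category.assoc, kernel.condition]

lemma isSplit_of_projective {X : C} (hX : Projective X) {A B : C} (f : A ⟶ B) :
    IsSplit (X ◁ f) := by
  haveI : Epi (X ◁ factorThruImage f) := epi_whiskerLeft X _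
  haveI : Mono (X ◁ image.ι f) := mono_whiskerLeft X _
  haveI hmid : Projective (X ⊗ image f) := projective_tensor hX _
  have hs : Projective.factorThru (𝟙 (X ⊗ image f)) (X ◁ factorThruImage f) ≫
      X ◁ factorThruImage f = 𝟙 _ := Projective.factorThru_comp _ _
  have hQ : Projective (cokernel (X ◁ image.ι f)) := by
    haveI := preservesColimits_tensorLeft (C := C) X
    have := Projective.of_iso (PreservesCokernel.iso (tensorLeft X) (image.ι f))
      (projective_tensor hX (cokernel (image.ι f)))
    simpa using this
  obtain ⟨r, hr⟩ := splitMono_of_projective_cokernel (X ◁ image.ι f) hQ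
  refine ⟨r ≫ Projective.factorThru (𝟙 (X ⊗ image f)) (X ◁ factorThruImage f), ?_⟩
  have hfac : X ◁ f = X ◁ factorThruImage f ≫ X ◁ image.ι f := by
    rw [← MonoidalCategory.whiskerLeft_comp, image.fac]
  rw [hfac]
  simp only [Category.assoc]
  rw [reassoc_of% hr, reassoc_of% hs]

lemma isSplit_of_injective {X : C} (hX : Injective X) {A B : C} (f : A ⟶ B) :
    IsSplit (X ◁ f) := by
  haveI : Epi (X ◁ factorThruImage f) := epi_whiskerLeft X _
  haveI : Mono (X ◁ image.ι f) := mono_whiskerLeft X _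
  haveI hmid : Injective (X ⊗ image f) := injective_tensor hX _
  have hr : X ◁ image.ι f ≫ Injective.factorThru (𝟙 (X ⊗ image f)) (X ◁ image.ι f) =
      𝟙 _ := Injective.comp_factorThru _ _
  have hK : Injective (kernel (X ◁ factorThruImage f)) := by
    haveI := preservesLimits_tensorLeft (C := C) X
    have := Injective.of_iso (PreservesKernel.iso (tensorLeft X) (factorThruImage f))
      (injective_tensor hX (kernel (factorThruImage f)))
    simpa using this
  obtain ⟨s, hs⟩ := splitEpi_of_injective_kernel (X ◁ factorThruImage f) hK
  refine ⟨Injective.factorThru (𝟙 (X ⊗ image f)) (X ◁ image.ι f) ≫ s, ?_⟩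
  have hfac : X ◁ f = X ◁ factorThruImage f ≫ X ◁ image.ι f := by
    rw [← MonoidalCategory.whiskerLeft_comp, image.fac]
  rw [hfac]
  simp only [Category.assoc]
  rw [reassoc_of% hr, reassoc_of% hs]

lemma splitEpi_of_isSplit {X : C} (H : ∀ ⦃A B : C⦄ (f : A ⟶ B), IsSplit (X ◁ f))
    {E : C} (p : E ⟶ X) [Epi p] : ∃ s : X ⟶ E, s ≫ p = 𝟙 X := by
  obtain ⟨g, hg⟩ := H ((ᘁX) ◁ p)
  haveI : Epi ((ᘁX) ◁ p) := epi_whiskerLeft _ p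
  haveI : Epi (X ◁ ((ᘁX) ◁ p)) := epi_whiskerLeft _ _
  have hg1 : g ≫ X ◁ ((ᘁX) ◁ p) = 𝟙 _ := by
    rw [← cancel_epi (X ◁ ((ᘁX) ◁ p))]; simpa using hg
  refine ⟨(ρ_ X).inv ≫ X ◁ η_ (ᘁX) X ≫ g ≫ (α_ X (ᘁX) E).inv ≫ ε_ (ᘁX) X ▷ E ≫
      (λ_ E).hom, ?_⟩
  simp only [Category.assoc]
  rw [← leftUnitor_naturality, ← whisker_exchange_assoc,
    ← associator_inv_naturality_right_assoc, reassoc_of% hg1]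
  simp

lemma splitMono_of_isSplit {X : C} (H : ∀ ⦃A B : C⦄ (f : A ⟶ B), IsSplit (X ◁ f))
    {Z : C} (n : X ⟶ Z) [Mono n] : ∃ r : Z ⟶ X, n ≫ r = 𝟙 X := by
  obtain ⟨g, hg⟩ := H ((Xᘁ) ◁ n)
  haveI : Mono ((Xᘁ) ◁ n) := mono_whiskerLeft _ n
  haveI : Mono (X ◁ ((Xᘁ) ◁ n)) := mono_whiskerLeft _ _
  have hg1 : X ◁ ((Xᘁ) ◁ n) ≫ g = 𝟙 _ := by
    rw [← cancel_mono (X ◁ ((Xᘁ) ◁ n))]; simpa [Category.assoc] using hg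
  refine ⟨(λ_ Z).inv ≫ η_ X (Xᘁ) ▷ Z ≫ (α_ X (Xᘁ) Z).hom ≫ g ≫ X ◁ ε_ X (Xᘁ) ≫
      (ρ_ X).hom, ?_⟩
  rw [leftUnitor_inv_naturality_assoc, whisker_exchange_assoc,
    associator_naturality_right_assoc, reassoc_of% hg1]
  simp

lemma projective_of_isSplit {X : C} (H : ∀ ⦃A B : C⦄ (f : A ⟶ B), IsSplit (X ◁ f)) :
    Projective X := by
  constructor
  intro E W f e he
  obtain ⟨s, hs⟩ := splitEpi_of_isSplit H (pullback.fst f e)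
  refine ⟨s ≫ pullback.snd f e, ?_⟩
  rw [Category.assoc, ← pullback.condition, ← Category.assoc, hs, Category.id_comp]

lemma injective_of_isSplit {X : C} (H : ∀ ⦃A B : C⦄ (f : A ⟶ B), IsSplit (X ◁ f)) :
    Injective X := by
  constructor
  intro A B g f hf
  obtain ⟨r, hr⟩ := splitMono_of_isSplit H (pushout.inl g f)
  refine ⟨pushout.inr g f ≫ r, ?_⟩
  rw [← Category.assoc, ← pushout.condition, Category.assoc, hr, Category.comp_id]

end Stmt5Aux

end Aux

/-- In a tensor category (`k`-linear abelian rigid symmetric monoidal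
with `End(𝟙) = k`), an object `X` is projective iff it is injective, iff `X ⊗ f` is
split for every morphism `f`. -/
theorem stmt5 {k : Type*} [Field k] {C : Type u} [Category.{v} C] [Abelian C]
    [Linear k C] [MonoidalCategory C] [SymmetricCategory C] [MonoidalPreadditive C]
    [MonoidalLinear k C] [RigidCategory C]
    (hEnd : Function.Bijective fun a : k => a • (𝟙 (𝟙_ C)))
    (X : C) :
    (Projective X ↔ Injective X) ∧
      (Projective X ↔ ∀ ⦃A B : C⦄ (f : A ⟶ B), IsSplit (X ◁ f)) := by
  refine ⟨⟨fun h => Stmt5Aux.injective_of_isSplit fun A B f => Stmt5Aux.isSplit_of_projective h f,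
           fun h => Stmt5Aux.projective_of_isSplit fun A B f => Stmt5Aux.isSplit_of_injective h f⟩,
          ⟨fun h A B f => Stmt5Aux.isSplit_of_projective h f,
           fun H => Stmt5Aux.projective_of_isSplit H⟩⟩
end

section
/- Let 𝐓 be a tensor category over a field k and Ind𝐓 its ind-completion. Any object of Ind𝐓 admitting a (left) dual is isomorphic to an object of 𝐓, i.e., the full subcategory of rigid objects in Ind𝐓 is equivalent to 𝐓. -/
open CategoryTheory CategoryTheory.Limits CategoryTheory.MonoidalCategory

universe v u

universe v₁ u₁ v₂ u₂

/-- `P` is a compact object: maps out of `P` into a filtered colimit factor through a stage. -/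
def IsCompactObj {D : Type u₂} [Category.{v₂} D] (P : D) : Prop :=
  ∀ (J : Type v₂) (_ : SmallCategory J) (_ : IsFiltered J) (F : J ⥤ D) (c : Cocone F),
    Nonempty (IsColimit c) → ∀ f : P ⟶ c.pt, ∃ (j : J) (g : P ⟶ F.obj j),
      g ≫ c.ι.app j = f

/-- Let `T` be a tensor category over `k` and `ι : T ⥤ D` its
ind-completion (a fully faithful monoidal functor into a monoidal category `D` in which the
unit is compact, tensoring is cocontinuous on filtered colimits, and every object is a
filtered colimit of objects of `T`). Then any object of `D` admitting a dual is isomorphic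
to an object of `T`. -/
theorem stmt6 {k : Type*} [Field k]
    {T : Type u₁} [Category.{v₁} T] [Abelian T] [Linear k T] [MonoidalCategory T]
    [SymmetricCategory T] [MonoidalPreadditive T] [MonoidalLinear k T] [RigidCategory T]
    (hEnd : Function.Bijective fun a : k => a • (𝟙 (𝟙_ T)))
    {D : Type u₂} [Category.{v₂} D] [MonoidalCategory D]
    (ι : T ⥤ D) [ι.Full] [ι.Faithful] [ι.Monoidal]
    (hunit : IsCompactObj (𝟙_ D))
    (hcompact : ∀ A : T, IsCompactObj (ι.obj A))
    (htens : ∀ Y : D, Nonempty (PreservesFilteredColimits (tensorRight Y)))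
    (hfilt : ∀ X : D, ∃ (J : Type v₂) (_ : SmallCategory J) (_ : IsFiltered J)
      (F : J ⥤ T) (c : Cocone (F ⋙ ι)), Nonempty (IsColimit c) ∧ c.pt = X)
    (X Xd : D) [ExactPairing X Xd] :
    ∃ A : T, Nonempty (ι.obj A ≅ X) := by
  obtain ⟨J, hJ, hJf, F, c, ⟨hc⟩, hpt⟩ := hfilt X
  subst hpt
  obtain ⟨P⟩ := htens Xd
  have hc' : IsColimit ((tensorRight Xd).mapCocone c) := isColimitOfPreserves _ hc
  obtain ⟨j, g, hg⟩ := hunit J hJ hJf ((F ⋙ ι) ⋙ tensorRight Xd)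
    ((tensorRight Xd).mapCocone c) ⟨hc'⟩ (η_ c.pt Xd)
  set f : ι.obj (F.obj j) ⟶ c.pt := c.ι.app j with hf
  have hg' : g ≫ (f ▷ Xd) = η_ c.pt Xd := hg
  set r : c.pt ⟶ ι.obj (F.obj j) :=
    (λ_ c.pt).inv ≫ (g ▷ c.pt) ≫ (α_ _ _ _).hom ≫ (_ ◁ ε_ c.pt Xd) ≫ (ρ_ _).hom with hr
  have key : (λ_ c.pt).inv ≫ (η_ c.pt Xd ▷ c.pt) ≫ (α_ _ _ _).hom ≫
      (c.pt ◁ ε_ c.pt Xd) ≫ (ρ_ c.pt).hom = 𝟙 c.pt := by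
    rw [ExactPairing.evaluation_coevaluation_assoc]
    simp
  have hrf : r ≫ f = 𝟙 c.pt := by
    rw [← key, ← hg']
    simp only [hr, Category.assoc, comp_whiskerRight]
    congr 2
    rw [associator_naturality_left_assoc, ← whisker_exchange_assoc,
      MonoidalCategory.rightUnitor_naturality]
    rfl
  have he : ι.map (ι.preimage (f ≫ r)) = f ≫ r := ι.map_preimage _
  have hee : ι.preimage (f ≫ r) ≫ ι.preimage (f ≫ r) = ι.preimage (f ≫ r) := by
    apply ι.map_injective
    simp only [Functor.map_comp, he]
    rw [Category.assoc, ← Category.assoc r f, hrf, Category.id_comp]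
  obtain ⟨B, i, e, hie, hei⟩ :=
    IsIdempotentComplete.idempotents_split (F.obj j) (ι.preimage (f ≫ r)) hee
  refine ⟨B, ⟨⟨ι.map i ≫ f, r ≫ ι.map e, ?_, ?_⟩⟩⟩
  · have : ι.map i ≫ (f ≫ r) ≫ ι.map e = 𝟙 _ := by
      rw [← he, ← ι.map_comp, ← ι.map_comp, ← hei]
      rw [show i ≫ (e ≫ i) ≫ e = (i ≫ e) ≫ (i ≫ e) by simp, hie]
      simp
    simpa using this
  · have : r ≫ (ι.map e ≫ ι.map i) ≫ f = 𝟙 _ := by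
      rw [← ι.map_comp, hei, he]
      rw [show r ≫ (f ≫ r) ≫ f = (r ≫ f) ≫ (r ≫ f) by simp, hrf]
      simp
    simpa using this
end

section
/- Let 𝒟 be a pseudo-tensor category, 𝒟₀ ⊂ 𝒟 a pseudo-tensor subcategory (full, monoidal, closed under duals, direct sums and summands), and X ∈ 𝒟₀. Then the full subcategory 𝒟₁ of objects V ∈ 𝒟 with V ⊗ X ∈ 𝒟₀ is again a pseudo-tensor subcategory of 𝒟: it contains 𝟙, and is closed under tensor products, duals, direct sums, and direct summands. -/
open CategoryTheory CategoryTheory.Limits CategoryTheory.MonoidalCategory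

universe v u

section Aux

variable {C : Type u} [Category.{v} C]

/-- `B` is a direct summand of `A`. -/
def Sd (B A : C) : Prop := ∃ (i : B ⟶ A) (r : A ⟶ B), i ≫ r = 𝟙 B

lemma Sd.isoRight {B A A' : C} (h : Sd B A) (e : A ≅ A') : Sd B A' := by
  obtain ⟨i, r, hir⟩ := h
  exact ⟨i ≫ e.hom, e.inv ≫ r, by simp [hir]⟩

lemma Sd.isoLeft {B B' A : C} (e : B ≅ B') (h : Sd B A) : Sd B' A := by
  obtain ⟨i, r, hir⟩ := h
  exact ⟨e.inv ≫ i, r ≫ e.hom, by simp [reassoc_of% hir]⟩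

variable [MonoidalCategory C]

lemma Sd.whiskerLeft {B A : C} (V : C) (h : Sd B A) : Sd (V ⊗ B) (V ⊗ A) := by
  obtain ⟨i, r, hir⟩ := h
  exact ⟨V ◁ i, V ◁ r, by rw [← MonoidalCategory.whiskerLeft_comp, hir,
    MonoidalCategory.whiskerLeft_id]⟩

lemma Sd.whiskerRight {B A : C} (V : C) (h : Sd B A) : Sd (B ⊗ V) (A ⊗ V) := by
  obtain ⟨i, r, hir⟩ := h
  exact ⟨i ▷ V, r ▷ V, by rw [← comp_whiskerRight, hir, id_whiskerRight]⟩

/-- `X` is a direct summand of `X ⊗ (Xᘁ ⊗ X)`, via the zig-zag identities. -/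
lemma sd_self_tensor_dual_tensor (X Xd : C) [ExactPairing X Xd] :
    Sd X (X ⊗ (Xd ⊗ X)) := by
  refine ⟨(λ_ X).inv ≫ (η_ X Xd ▷ X) ≫ (α_ X Xd X).hom,
    (X ◁ ε_ X Xd) ≫ (ρ_ X).hom, ?_⟩
  simp only [Category.assoc]
  rw [← Category.assoc (η_ X Xd ▷ X), ← Category.assoc _ (X ◁ ε_ X Xd),
    Category.assoc (η_ X Xd ▷ X), ExactPairing.evaluation_coevaluation]
  simp

/-- The canonical isomorphism `(V ⊗ X)ᘁ ≅ Xᘁ ⊗ Vᘁ`, obtained from uniqueness of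
right adjoints of `tensorRight (V ⊗ X)`. -/
noncomputable def dualTensorIso (V X : C) [HasRightDual V] [HasRightDual X]
    [HasRightDual (V ⊗ X)] : ((V ⊗ X)ᘁ : C) ≅ (Xᘁ : C) ⊗ (Vᘁ : C) := by
  have adj1 : tensorRight (V ⊗ X) ⊣ tensorRight ((V ⊗ X)ᘁ : C) :=
    tensorRightAdjunction _ _
  have adj2 : tensorRight V ⋙ tensorRight X ⊣
      tensorRight (Xᘁ : C) ⋙ tensorRight (Vᘁ : C) :=
    (tensorRightAdjunction V (Vᘁ : C)).comp (tensorRightAdjunction X (Xᘁ : C))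
  have adj2' : tensorRight (V ⊗ X) ⊣ tensorRight (Xᘁ : C) ⋙ tensorRight (Vᘁ : C) :=
    adj2.ofNatIsoLeft (tensorRightTensor V X).symm
  have e := (adj1.rightAdjointUniq adj2').app (𝟙_ C)
  exact (λ_ _).symm ≪≫ e ≪≫ whiskerRightIso (λ_ _) _
end Aux


/-- If `P₀` is (the object predicate of) a pseudo-tensor subcategory of a
pseudo-tensor category `C` and `X` satisfies `P₀`, then `P₁ V := P₀ (V ⊗ X)` is again
(the object predicate of) a pseudo-tensor subcategory: it contains `𝟙` and is closed under
tensor products, duals, direct sums and direct summands. -/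
theorem stmt7 {k : Type*} [Field k] {C : Type u} [Category.{v} C] [Preadditive C]
    [Linear k C] [HasBinaryBiproducts C] [MonoidalCategory C] [SymmetricCategory C]
    [MonoidalPreadditive C] [MonoidalLinear k C] [RigidCategory C] [IsIdempotentComplete C]
    (hEnd : Function.Bijective fun a : k => a • (𝟙 (𝟙_ C)))
    (P₀ : C → Prop)
    (hIso : ∀ {A B : C}, (A ≅ B) → P₀ A → P₀ B)
    (hOne : P₀ (𝟙_ C))
    (hTensor : ∀ {A B : C}, P₀ A → P₀ B → P₀ (A ⊗ B))
    (hDual : ∀ {A : C}, P₀ A → P₀ (Aᘁ))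
    (hSum : ∀ {A B : C}, P₀ A → P₀ B → P₀ (A ⊞ B))
    (hSummand : ∀ {A B : C}, P₀ A → (∃ (i : B ⟶ A) (r : A ⟶ B), i ≫ r = 𝟙 B) → P₀ B)
    (X : C) (hX : P₀ X) :
    P₀ ((𝟙_ C) ⊗ X) ∧
      (∀ {V W : C}, P₀ (V ⊗ X) → P₀ (W ⊗ X) → P₀ ((V ⊗ W) ⊗ X)) ∧
      (∀ {V : C}, P₀ (V ⊗ X) → P₀ ((Vᘁ) ⊗ X)) ∧
      (∀ {V W : C}, P₀ (V ⊗ X) → P₀ (W ⊗ X) → P₀ ((V ⊞ W) ⊗ X)) ∧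
      (∀ {V W : C}, P₀ (V ⊗ X) →
        (∃ (i : W ⟶ V) (r : V ⟶ W), i ≫ r = 𝟙 W) → P₀ (W ⊗ X)) := by
  have hSd : ∀ {A B : C}, P₀ A → Sd B A → P₀ B := fun hA h => hSummand hA h
  have sdX : Sd X (X ⊗ ((Xᘁ : C) ⊗ X)) := sd_self_tensor_dual_tensor X (Xᘁ : C)
  refine ⟨hIso (λ_ X).symm hX, ?_, ?_, ?_, ?_⟩
  · -- tensor
    intro V W hV hW
    -- (V ⊗ W) ⊗ X is a summand of (V ⊗ X) ⊗ (Xᘁ ⊗ (W ⊗ X))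
    have h1 : Sd (W ⊗ X) (X ⊗ ((Xᘁ : C) ⊗ (W ⊗ X))) := by
      have := (sdX.whiskerLeft W).isoRight
        ((whiskerLeftIso W (α_ X (Xᘁ : C) X).symm) ≪≫ (α_ W (X ⊗ (Xᘁ : C)) X).symm ≪≫
          whiskerRightIso (β_ W (X ⊗ (Xᘁ : C))) X ≪≫ α_ (X ⊗ (Xᘁ : C)) W X ≪≫
          whiskerLeftIso (X ⊗ (Xᘁ : C)) (Iso.refl (W ⊗ X)) ≪≫ α_ X (Xᘁ : C) (W ⊗ X))
      exact this
    have h2 : Sd ((V ⊗ W) ⊗ X) ((V ⊗ X) ⊗ ((Xᘁ : C) ⊗ (W ⊗ X))) := by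
      have := ((h1.whiskerLeft V).isoRight (α_ V X ((Xᘁ : C) ⊗ (W ⊗ X))).symm).isoLeft
        ((α_ V W X).symm : V ⊗ (W ⊗ X) ≅ (V ⊗ W) ⊗ X)
      exact this
    exact hSd (hTensor hV (hTensor (hDual hX) hW)) h2
  · -- dual
    intro V hV
    have hVdXd : P₀ ((Vᘁ : C) ⊗ (Xᘁ : C)) := by
      refine hIso ?_ (hDual hV)
      exact dualTensorIso V X ≪≫ β_ (Xᘁ : C) (Vᘁ : C)
    have h1 : Sd ((Vᘁ : C) ⊗ X) (((Vᘁ : C) ⊗ (Xᘁ : C)) ⊗ (X ⊗ X)) := by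
      have := (sdX.whiskerLeft (Vᘁ : C)).isoRight
        (whiskerLeftIso (Vᘁ : C)
          ((α_ X (Xᘁ : C) X).symm ≪≫ whiskerRightIso (β_ X (Xᘁ : C)) X ≪≫
            α_ (Xᘁ : C) X X) ≪≫ (α_ (Vᘁ : C) (Xᘁ : C) (X ⊗ X)).symm)
      exact this
    exact hSd (hTensor hVdXd (hTensor hX hX)) h1
  · -- biproducts
    intro V W hV hW
    refine hIso ?_ (hSum hV hW)
    refine ⟨biprod.desc (biprod.inl ▷ X) (biprod.inr ▷ X),
      biprod.lift (biprod.fst ▷ X) (biprod.snd ▷ X), ?_, ?_⟩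
    · apply biprod.hom_ext' <;> apply biprod.hom_ext <;>
        simp [← comp_whiskerRight]
    · rw [biprod.lift_desc, ← comp_whiskerRight, ← comp_whiskerRight,
        ← MonoidalPreadditive.add_whiskerRight, biprod.total, id_whiskerRight]
  · -- summand
    intro V W hV ⟨i, r, hir⟩
    exact hSd hV ⟨i ▷ X, r ▷ X, by rw [← comp_whiskerRight, hir, id_whiskerRight]⟩
end

section
/- In a pseudo-tensor category 𝒟, an object X is faithful (i.e., X ⊗ − : 𝒟 → 𝒟 is a faithful functor) if and only if the evaluation ev_X : X⁰ ⊗ X → 𝟙 is an epimorphism. -/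
open CategoryTheory CategoryTheory.Limits CategoryTheory.MonoidalCategory

universe v u

/-!
If `X ⊗ −` is faithful, the zigzag identity writes `X ◁ f`, for `f : 𝟙 ⟶ A`, in terms of
`ε ≫ f`, so `ε ≫ f` determines `f`. Conversely, `ε ▷ A` is an epimorphism because `− ⊗ A`
is a left adjoint, and the interchange law `ε ▷ A ≫ 𝟙 ◁ f = (Xd ⊗ X) ◁ f ≫ ε ▷ B` shows that
`X ◁ f` determines `f`.
-/

namespace CategoryTheory.MonoidalCategory

variable {C : Type u} [Category.{v} C] [MonoidalCategory C]

theorem rightUnitor_inv_comp_whiskerLeft_eq (X Xd : C) [ExactPairing X Xd] {A : C}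
    (f : 𝟙_ C ⟶ A) :
    (ρ_ X).inv ≫ X ◁ f =
      (λ_ X).inv ≫ η_ X Xd ▷ X ≫ (α_ X Xd X).hom ≫ X ◁ (ε_ X Xd ≫ f) := by
  rw [whiskerLeft_comp]
  slice_rhs 2 4 => rw [ExactPairing.evaluation_coevaluation]
  simp

theorem epi_evaluation_of_faithful (X Xd : C) [ExactPairing X Xd]
    [(tensorLeft X).Faithful] : Epi (ε_ X Xd) where
  left_cancellation {A} f g hfg := by
    have h : (ρ_ X).inv ≫ X ◁ f = (ρ_ X).inv ≫ X ◁ g := by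
      rw [rightUnitor_inv_comp_whiskerLeft_eq X Xd, rightUnitor_inv_comp_whiskerLeft_eq X Xd, hfg]
    exact (tensorLeft X).map_injective (cancel_epi _ |>.mp h)

theorem faithful_tensorLeft_of_epi_evaluation [RightRigidCategory C] (X Xd : C)
    [ExactPairing X Xd] [Epi (ε_ X Xd)] : (tensorLeft X).Faithful where
  map_injective {A B} f g (hfg : X ◁ f = X ◁ g) := by
    have hε : Epi (ε_ X Xd ▷ A) :=
      (Functor.preservesEpimorphisms_of_adjunction (tensorRightAdjunction A Aᘁ)).preserves _
    have hdual : (Xd ⊗ X) ◁ f = (Xd ⊗ X) ◁ g := by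
      rw [tensor_whiskerLeft, tensor_whiskerLeft, hfg]
    have hunit : 𝟙_ C ◁ f = 𝟙_ C ◁ g := by
      rw [← cancel_epi (ε_ X Xd ▷ A), ← whisker_exchange, ← whisker_exchange, hdual]
    simpa using congrArg (fun t => (λ_ A).inv ≫ t ≫ (λ_ B).hom) hunit

end CategoryTheory.MonoidalCategory

theorem stmt9_general {C : Type u} [Category.{v} C] [MonoidalCategory C] [RigidCategory C]
    (X Xd : C) [ExactPairing X Xd] :
    (tensorLeft X).Faithful ↔ Epi (ε_ X Xd) :=
  ⟨fun _ => epi_evaluation_of_faithful X Xd, fun _ => faithful_tensorLeft_of_epi_evaluation X Xd⟩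

/-- In a pseudo-tensor category, `X ⊗ −` is a faithful functor iff the
evaluation `ev_X : X⁰ ⊗ X ⟶ 𝟙` is an epimorphism. -/
theorem stmt9 {k : Type*} [Field k] {C : Type u} [Category.{v} C] [Preadditive C]
    [Linear k C] [MonoidalCategory C] [SymmetricCategory C] [MonoidalPreadditive C]
    [MonoidalLinear k C] [RigidCategory C] [IsIdempotentComplete C]
    (hEnd : Function.Bijective fun a : k => a • (𝟙 (𝟙_ C)))
    (X Xd : C) [ExactPairing X Xd] :
    (tensorLeft X).Faithful ↔ Epi (ε_ X Xd) :=
  stmt9_general X Xd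
end

section
/- In a pseudo-tensor category 𝒟, an object X is strongly faithful if and only if its dual X⁰ is strongly faithful. -/
open CategoryTheory CategoryTheory.Limits CategoryTheory.MonoidalCategory

universe v u

/-!
The braiding turns `ev_X` into a second evaluation `β ≫ ev_X` exhibiting `X` as a right dual of
`X⁰`. Since right duals are unique up to an isomorphism compatible with the evaluations,
there is an isomorphism `φ : X ⊗ X⁰ ≅ X⁰ ⊗ X` (an automorphism of `X` followed by the braiding)
with `φ ≫ ev_X = ev_{X⁰}`. The morphism `ℰ` is natural for evaluation-preserving maps, so `φ`
transports the cokernel sequence of `X` to that of `X⁰`.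
-/

namespace IsCokernelSeq

variable {C : Type u} [Category.{v} C] [Preadditive C]

lemma of_iso {X₂ X₁ Y₂ Y₁ Z : C} {p : X₂ ⟶ X₁} {q : X₁ ⟶ Z} {p' : Y₂ ⟶ Y₁} {q' : Y₁ ⟶ Z}
    (e₂ : Y₂ ≅ X₂) (e₁ : Y₁ ≅ X₁) (hp : e₂.hom ≫ p = p' ≫ e₁.hom) (hq : e₁.hom ≫ q = q')
    (H : IsCokernelSeq p q) : IsCokernelSeq p' q' := by
  obtain ⟨hpq, hdesc⟩ := H
  obtain rfl : p' = e₂.hom ≫ p ≫ e₁.inv := by simp [reassoc_of% hp]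
  subst hq
  refine ⟨by simp [hpq], fun A h hh => ?_⟩
  obtain ⟨t, ht, huniq⟩ := hdesc (e₁.inv ≫ h) (by simpa using hh)
  refine ⟨t, by simp [ht], fun t' ht' => huniq t' ?_⟩
  simp [← ht']

end IsCokernelSeq

section StronglyFaithful

variable {C : Type u} [Category.{v} C] [MonoidalCategory C]

lemma rightDualIso_hom_whiskerRight_comp_evaluation {X Y₁ Y₂ : C}
    (p₁ : ExactPairing X Y₁) (p₂ : ExactPairing X Y₂) :
    (rightDualIso p₁ p₂).hom ▷ X ≫ @ExactPairing.evaluation _ _ _ X Y₂ p₂ =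
      @ExactPairing.evaluation _ _ _ X Y₁ p₁ := by
  have h := @rightAdjointMate_comp_evaluation _ _ _ X X ⟨Y₂⟩ ⟨Y₁⟩ (𝟙 X)
  rw [MonoidalCategory.whiskerLeft_id, Category.id_comp] at h
  exact h

variable [Preadditive C]

lemma calE_naturality {X Xd Y Yd : C} [ExactPairing X Xd] [ExactPairing Y Yd]
    (φ : Xd ⊗ X ⟶ Yd ⊗ Y) (hφ : φ ≫ ε_ Y Yd = ε_ X Xd) :
    (φ ⊗ₘ φ) ≫ calE Y Yd = calE X Xd ≫ φ := by
  rw [calE, calE, ← hφ, Preadditive.comp_sub, Preadditive.sub_comp]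
  congr 1
  · rw [MonoidalCategory.tensorHom_def, comp_whiskerRight, Category.assoc, whisker_exchange_assoc,
      leftUnitor_naturality]
    simp only [Category.assoc]
  · rw [tensorHom_def', MonoidalCategory.whiskerLeft_comp, Category.assoc,
      ← whisker_exchange_assoc, rightUnitor_naturality]
    simp only [Category.assoc]

lemma StronglyFaithful.of_iso {X Xd Y Yd : C} [ExactPairing X Xd] [ExactPairing Y Yd]
    (φ : Xd ⊗ X ≅ Yd ⊗ Y) (hφ : φ.hom ≫ ε_ Y Yd = ε_ X Xd) (H : StronglyFaithful Y Yd) :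
    StronglyFaithful X Xd :=
  IsCokernelSeq.of_iso (tensorIso φ φ) φ (calE_naturality φ.hom hφ) hφ H

lemma StronglyFaithful.dual [BraidedCategory C] {X Xd : C} [ExactPairing X Xd]
    [ExactPairing Xd X] (H : StronglyFaithful X Xd) : StronglyFaithful Xd X := by
  have hg := rightDualIso_hom_whiskerRight_comp_evaluation ‹ExactPairing Xd X›
    (BraidedCategory.exactPairing_swap X Xd)
  exact H.of_iso (whiskerRightIso _ Xd ≪≫ β_ X Xd) ((Category.assoc _ _ _).trans hg)

end StronglyFaithful

theorem stmt10_general {C : Type u} [Category.{v} C] [Preadditive C]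
    [MonoidalCategory C] [SymmetricCategory C]
    (X Xd : C) [ExactPairing X Xd] [ExactPairing Xd X] :
    StronglyFaithful X Xd ↔ StronglyFaithful Xd X :=
  ⟨StronglyFaithful.dual, StronglyFaithful.dual⟩

/-- `X` is strongly faithful iff its dual `X⁰` is strongly faithful. -/
theorem stmt10 {k : Type*} [Field k] {C : Type u} [Category.{v} C] [Preadditive C]
    [Linear k C] [MonoidalCategory C] [SymmetricCategory C] [MonoidalPreadditive C]
    [MonoidalLinear k C] [RigidCategory C] [IsIdempotentComplete C]
    (hEnd : Function.Bijective fun a : k => a • (𝟙 (𝟙_ C)))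
    (X Xd : C) [ExactPairing X Xd] [ExactPairing Xd X] :
    StronglyFaithful X Xd ↔ StronglyFaithful Xd X :=
  stmt10_general X Xd
end

section
/- In a pseudo-tensor category 𝒟, an object X is strongly faithful if and only if X ⊗ X⁰ reflects cokernels, if and only if X reflects both kernels and cokernels. -/
open CategoryTheory CategoryTheory.Limits CategoryTheory.MonoidalCategory

universe v u

/-- `Z` reflects cokernels: a sequence `X₂ ⟶ X₁ ⟶ X₀ ⟶ 0` is exact whenever its tensor
product with `Z` is exact. -/
def ReflectsCok {C : Type u} [Category.{v} C] [Preadditive C] [MonoidalCategory C]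
    (Z : C) : Prop :=
  ∀ ⦃X₂ X₁ X₀ : C⦄ (p : X₂ ⟶ X₁) (q : X₁ ⟶ X₀),
    IsCokernelSeq (Z ◁ p) (Z ◁ q) → IsCokernelSeq p q

/-- `Z` reflects kernels: a sequence `0 ⟶ X₀ ⟶ X₁ ⟶ X₂` is exact whenever its tensor
product with `Z` is exact. -/
def ReflectsKer {C : Type u} [Category.{v} C] [Preadditive C] [MonoidalCategory C]
    (Z : C) : Prop :=
  ∀ ⦃X₀ X₁ X₂ : C⦄ (i : X₀ ⟶ X₁) (p : X₁ ⟶ X₂),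
    IsKernelSeq (Z ◁ i) (Z ◁ p) → IsKernelSeq i p


set_option linter.unusedSectionVars false
set_option maxHeartbeats 1000000

section Helpers
variable {C : Type u} [Category.{v} C] [Preadditive C] {X₂ X₁ X₀ : C}

theorem cok_cancel {p : X₂ ⟶ X₁} {q : X₁ ⟶ X₀} (h : IsCokernelSeq p q)
    {A : C} {a b : X₀ ⟶ A} (hab : q ≫ a = q ≫ b) : a = b := by
  obtain ⟨t, ht, hu⟩ := h.2 (q ≫ a) (by rw [reassoc_of% h.1, Limits.zero_comp])
  exact (hu a rfl).trans (hu b hab.symm).symm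

theorem cok_of_iso {X₂' X₁' X₀' : C} {p : X₂ ⟶ X₁} {q : X₁ ⟶ X₀}
    {p' : X₂' ⟶ X₁'} {q' : X₁' ⟶ X₀'} (e₂ : X₂' ≅ X₂) (e₁ : X₁' ≅ X₁) (e₀ : X₀' ≅ X₀)
    (hp : p' ≫ e₁.hom = e₂.hom ≫ p) (hq : q' ≫ e₀.hom = e₁.hom ≫ q)
    (h : IsCokernelSeq p q) : IsCokernelSeq p' q' := by
  have hp' : p' = e₂.hom ≫ p ≫ e₁.inv := by rw [← reassoc_of% hp]; simp
  have hq' : q' = e₁.hom ≫ q ≫ e₀.inv := by rw [← reassoc_of% hq]; simp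
  constructor
  · rw [hp', hq']; simp [reassoc_of% h.1]
  · intro A f hf
    have : p ≫ (e₁.inv ≫ f) = 0 := by
      rw [hp'] at hf
      simpa using (e₂.inv ≫= hf)
    obtain ⟨t, ht, hu⟩ := h.2 _ this
    refine ⟨e₀.hom ≫ t, by rw [hq']; simp [ht], ?_⟩
    intro s hs
    have : q ≫ (e₀.inv ≫ s) = e₁.inv ≫ f := by
      rw [hq'] at hs
      rw [← hs]; simp
    rw [← hu _ this]; simp


theorem ker_cancel {X₀ X₁ X₂ : C} {i : X₀ ⟶ X₁} {p : X₁ ⟶ X₂} (h : IsKernelSeq i p)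
    {A : C} {a b : A ⟶ X₀} (hab : a ≫ i = b ≫ i) : a = b := by
  obtain ⟨t, ht, hu⟩ := h.2 (a ≫ i) (by rw [Category.assoc, h.1, Limits.comp_zero])
  exact (hu a rfl).trans (hu b hab.symm).symm

theorem cok_split {p : X₂ ⟶ X₁} {q : X₁ ⟶ X₀} (hz : p ≫ q = 0)
    (h₀ : X₀ ⟶ X₁) (h₁ : X₁ ⟶ X₂)
    (e1 : h₀ ≫ q = 𝟙 X₀) (e2 : q ≫ h₀ + h₁ ≫ p = 𝟙 X₁) : IsCokernelSeq p q := by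
  refine ⟨hz, fun A f hf => ⟨h₀ ≫ f, ?_, ?_⟩⟩
  · have : (q ≫ h₀ + h₁ ≫ p) ≫ f = f := by rw [e2, Category.id_comp]
    rw [Preadditive.add_comp, Category.assoc, Category.assoc, hf, Limits.comp_zero,
      add_zero] at this
    exact this
  · intro s hs
    rw [← hs, ← Category.assoc, e1, Category.id_comp]

end Helpers
section M
variable {C : Type u} [Category.{v} C] [Preadditive C] [MonoidalCategory C]
  [MonoidalPreadditive C]

theorem wl_sub (Z : C) {M N : C} (f g : M ⟶ N) : Z ◁ (f - g) = Z ◁ f - Z ◁ g := by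
  have : Z ◁ (f - g) + Z ◁ g = Z ◁ f := by
    rw [← MonoidalPreadditive.whiskerLeft_add]; simp
  linear_combination (norm := abel) this

theorem cok_whiskerLeft {Z : C} [HasLeftDual Z] {X₂ X₁ X₀ : C} {p : X₂ ⟶ X₁} {q : X₁ ⟶ X₀}
    (h : IsCokernelSeq p q) : IsCokernelSeq (Z ◁ p) (Z ◁ q) := by
  constructor
  · rw [← MonoidalCategory.whiskerLeft_comp, h.1, MonoidalPreadditive.whiskerLeft_zero]
  · intro A f hf
    have key : ∀ {M M' : C} (u : M ⟶ M') (v : Z ⊗ M' ⟶ A),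
        (tensorLeftHomEquiv M (ᘁZ) Z A).symm (u ≫ tensorLeftHomEquiv M' (ᘁZ) Z A v)
          = Z ◁ u ≫ v := by
      intro M M' u v
      rw [tensorLeftHomEquiv_symm_naturality, Equiv.symm_apply_apply]
    have h1 : p ≫ (tensorLeftHomEquiv X₁ (ᘁZ) Z A) f = 0 := by
      have h2 := key p f
      rw [hf] at h2
      have h3 := congrArg (tensorLeftHomEquiv X₂ (ᘁZ) Z A) h2
      rw [Equiv.apply_symm_apply] at h3
      rw [h3]
      simp [tensorLeftHomEquiv]
    obtain ⟨t, ht, hu⟩ := h.2 _ h1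
    refine ⟨(tensorLeftHomEquiv X₀ (ᘁZ) Z A).symm t, ?_, ?_⟩
    · show Z ◁ q ≫ (tensorLeftHomEquiv X₀ (ᘁZ) Z A).symm t = f
      rw [← tensorLeftHomEquiv_symm_naturality q t, ht, Equiv.symm_apply_apply]
    · intro s hs
      have h4 : q ≫ (tensorLeftHomEquiv X₀ (ᘁZ) Z A) s = (tensorLeftHomEquiv X₁ (ᘁZ) Z A) f := by
        have h2 := key q s
        rw [hs] at h2
        have h3 := congrArg (tensorLeftHomEquiv X₁ (ᘁZ) Z A) h2
        rwa [Equiv.apply_symm_apply] at h3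
      rw [← hu _ h4, Equiv.symm_apply_apply]

/-- epi-like cancellation transported by whiskering -/
theorem epiLike_whiskerLeft {Z : C} [HasLeftDual Z] {M N : C} {f : M ⟶ N}
    (hf : ∀ ⦃A : C⦄ (a b : N ⟶ A), f ≫ a = f ≫ b → a = b) :
    ∀ ⦃A : C⦄ (a b : Z ⊗ N ⟶ A), (Z ◁ f) ≫ a = (Z ◁ f) ≫ b → a = b := by
  intro A a b hab
  have key : ∀ {M M' : C} (u : M ⟶ M') (v : Z ⊗ M' ⟶ A),
      (tensorLeftHomEquiv M (ᘁZ) Z A).symm (u ≫ tensorLeftHomEquiv M' (ᘁZ) Z A v)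
        = Z ◁ u ≫ v := by
    intro M M' u v
    rw [tensorLeftHomEquiv_symm_naturality, Equiv.symm_apply_apply]
  have h1 := key f a
  have h2 := key f b
  rw [hab] at h1
  have h3 : f ≫ (tensorLeftHomEquiv N (ᘁZ) Z A) a = f ≫ (tensorLeftHomEquiv N (ᘁZ) Z A) b :=
    (tensorLeftHomEquiv M (ᘁZ) Z A).symm.injective (h1.trans h2.symm)
  exact (tensorLeftHomEquiv N (ᘁZ) Z A).injective (hf _ _ h3)

theorem epiLike_conj {M N M' N' : C} {f : M ⟶ N} {f' : M' ⟶ N'}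
    (eM : M' ≅ M) (eN : N' ≅ N) (hc : f' ≫ eN.hom = eM.hom ≫ f)
    (hf : ∀ ⦃A : C⦄ (a b : N ⟶ A), f ≫ a = f ≫ b → a = b) :
    ∀ ⦃A : C⦄ (a b : N' ⟶ A), f' ≫ a = f' ≫ b → a = b := by
  intro A a b hab
  have hf' : f' = eM.hom ≫ f ≫ eN.inv := by rw [← reassoc_of% hc]; simp
  rw [hf'] at hab
  have h2 : f ≫ (eN.inv ≫ a) = f ≫ (eN.inv ≫ b) := by
    have h3 := eM.inv ≫= hab
    simpa using h3
  have h4 := hf _ _ h2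
  calc a = eN.hom ≫ (eN.inv ≫ a) := by simp
    _ = eN.hom ≫ (eN.inv ≫ b) := by rw [h4]
    _ = b := by simp

end M


section Core
variable {C : Type u} [Category.{v} C] [Preadditive C] [MonoidalCategory C]
  [MonoidalPreadditive C]

theorem calE_comp_ev (Y Y' : C) [ExactPairing Y Y'] : calE Y Y' ≫ ε_ Y Y' = 0 := by
  simp only [calE, Preadditive.sub_comp, Category.assoc]
  rw [← MonoidalCategory.leftUnitor_naturality, ← MonoidalCategory.rightUnitor_naturality,
    whisker_exchange_assoc, MonoidalCategory.unitors_equal, sub_self]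

def gmap (Y Y' : C) [ExactPairing Y Y'] {M N : C} (s : Y ⊗ M ⟶ Y ⊗ N) :
    (Y' ⊗ Y) ⊗ M ⟶ N :=
  (α_ Y' Y M).hom ≫ ((tensorLeftHomEquiv (Y ⊗ M) Y Y' N).symm s)

theorem gmap_inj (Y Y' : C) [ExactPairing Y Y'] {M N : C} {s s' : Y ⊗ M ⟶ Y ⊗ N}
    (h : gmap Y Y' s = gmap Y Y' s') : s = s' := by
  apply (tensorLeftHomEquiv (Y ⊗ M) Y Y' N).symm.injective
  have h2 := (α_ Y' Y M).inv ≫= h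
  simpa [gmap] using h2

theorem gmap_whiskerLeft (Y Y' : C) [ExactPairing Y Y'] {M N : C} (t : M ⟶ N) :
    gmap Y Y' (Y ◁ t) = (ε_ Y Y' ▷ M) ≫ (λ_ M).hom ≫ t := by
  rw [gmap]
  dsimp [tensorLeftHomEquiv]
  rw [← MonoidalCategory.associator_naturality_right_assoc, Iso.hom_inv_id_assoc,
    whisker_exchange_assoc, MonoidalCategory.leftUnitor_naturality]

theorem gmap_precomp (Y Y' : C) [ExactPairing Y Y'] {M' M N : C} (f : M' ⟶ M)
    (s : Y ⊗ M ⟶ Y ⊗ N) :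
    gmap Y Y' ((Y ◁ f) ≫ s) = ((Y' ⊗ Y) ◁ f) ≫ gmap Y Y' s := by
  rw [gmap, tensorLeftHomEquiv_symm_naturality (Y ◁ f) s, gmap]
  rw [← MonoidalCategory.associator_naturality_right_assoc]

theorem gmap_postcomp (Y Y' : C) [ExactPairing Y Y'] {M N N' : C}
    (s : Y ⊗ M ⟶ Y ⊗ N) (f : N ⟶ N') :
    gmap Y Y' (s ≫ (Y ◁ f)) = gmap Y Y' s ≫ f := by
  have : (tensorLeftHomEquiv (Y ⊗ M) Y Y' N').symm (s ≫ (Y ◁ f))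
      = (tensorLeftHomEquiv (Y ⊗ M) Y Y' N).symm s ≫ f := by
    apply (tensorLeftHomEquiv (Y ⊗ M) Y Y' N').injective
    rw [Equiv.apply_symm_apply, tensorLeftHomEquiv_naturality, Equiv.apply_symm_apply]
  rw [gmap, this, gmap, Category.assoc]

/-- contracting homotopy degree 0 -/
def hzero (Y Y' : C) [ExactPairing Y Y'] : Y ⊗ 𝟙_ C ⟶ Y ⊗ (Y' ⊗ Y) :=
  (ρ_ Y).hom ≫ (λ_ Y).inv ≫ (η_ Y Y' ▷ Y) ≫ (α_ Y Y' Y).hom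

/-- contracting homotopy degree 1 -/
def hone (Y Y' : C) [ExactPairing Y Y'] :
    Y ⊗ (Y' ⊗ Y) ⟶ Y ⊗ ((Y' ⊗ Y) ⊗ (Y' ⊗ Y)) :=
  (λ_ (Y ⊗ (Y' ⊗ Y))).inv ≫ (η_ Y Y' ▷ (Y ⊗ (Y' ⊗ Y))) ≫ (α_ Y Y' (Y ⊗ (Y' ⊗ Y))).hom ≫
    (Y ◁ (α_ Y' Y (Y' ⊗ Y)).inv)

theorem hzero_comp (Y Y' : C) [ExactPairing Y Y'] :
    hzero Y Y' ≫ (Y ◁ ε_ Y Y') = 𝟙 (Y ⊗ 𝟙_ C) := by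
  rw [hzero]
  simp

theorem hone_comp₁ (Y Y' : C) [ExactPairing Y Y'] :
    hone Y Y' ≫ (Y ◁ ((ε_ Y Y' ▷ (Y' ⊗ Y)) ≫ (λ_ (Y' ⊗ Y)).hom)) = 𝟙 (Y ⊗ (Y' ⊗ Y)) := by
  have h := (tensorLeftHomEquiv (Y ⊗ (Y' ⊗ Y)) Y Y' (Y' ⊗ Y)).apply_symm_apply
    (𝟙 (Y ⊗ (Y' ⊗ Y)))
  refine Eq.trans ?_ h
  dsimp [hone, tensorLeftHomEquiv]
  simp only [MonoidalCategory.whiskerLeft_comp, MonoidalCategory.whiskerLeft_id,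
    Category.id_comp, Category.assoc]

theorem hone_comp₂ (Y Y' : C) [ExactPairing Y Y'] :
    hone Y Y' ≫ (Y ◁ (((Y' ⊗ Y) ◁ ε_ Y Y') ≫ (ρ_ (Y' ⊗ Y)).hom)) =
      (Y ◁ ε_ Y Y') ≫ hzero Y Y' := by
  have inner : (α_ Y' Y (Y' ⊗ Y)).inv ≫ (((Y' ⊗ Y)) ◁ ε_ Y Y') ≫ (ρ_ (Y' ⊗ Y)).hom
      = Y' ◁ ((Y ◁ ε_ Y Y') ≫ (ρ_ Y).hom) := by
    rw [MonoidalCategory.whiskerLeft_comp, MonoidalCategory.whiskerLeft_rightUnitor,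
      MonoidalCategory.associator_inv_naturality_right_assoc]
  rw [hone, hzero]
  simp only [Category.assoc]
  rw [← MonoidalCategory.whiskerLeft_comp, inner]
  rw [← MonoidalCategory.associator_naturality_right]
  rw [← whisker_exchange_assoc]
  rw [← MonoidalCategory.leftUnitor_inv_naturality_assoc]
  simp

theorem split_whisker (Y Y' : C) [ExactPairing Y Y'] :
    IsCokernelSeq (Y ◁ calE Y Y') (Y ◁ ε_ Y Y') := by
  refine cok_split ?_ (hzero Y Y') (hone Y Y') (hzero_comp Y Y') ?_
  · rw [← MonoidalCategory.whiskerLeft_comp, calE_comp_ev,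
      MonoidalPreadditive.whiskerLeft_zero]
  · have h1 := hone_comp₁ Y Y'
    have h2 := hone_comp₂ Y Y'
    rw [calE, wl_sub, Preadditive.comp_sub, h1, h2]
    abel

end Core


section BraidCore
variable {C : Type u} [Category.{v} C] [Preadditive C] [MonoidalCategory C]
  [MonoidalPreadditive C] [BraidedCategory C] [LeftRigidCategory C]

theorem cok_whiskerRight {X₂ X₁ X₀ : C} {p : X₂ ⟶ X₁} {q : X₁ ⟶ X₀}
    (h : IsCokernelSeq p q) (M : C) :
    IsCokernelSeq (p ▷ M) (q ▷ M) :=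
  cok_of_iso (β_ X₂ M) (β_ X₁ M) (β_ X₀ M)
    (BraidedCategory.braiding_naturality_left p M)
    (BraidedCategory.braiding_naturality_left q M) (cok_whiskerLeft h)

theorem faithful_of_SF {Y Y' : C} [ExactPairing Y Y'] (hSF : StronglyFaithful Y Y')
    {M N : C} {f : M ⟶ N} (hf : Y ◁ f = 0) : f = 0 := by
  have h2 : ((Y' ⊗ Y) ◁ f) = 0 := by
    rw [MonoidalCategory.tensor_whiskerLeft, hf, MonoidalPreadditive.whiskerLeft_zero,
      Limits.zero_comp, Limits.comp_zero]
  have h3 : (ε_ Y Y' ▷ M) ≫ ((λ_ M).hom ≫ f) = (ε_ Y Y' ▷ M) ≫ ((λ_ M).hom ≫ 0) := by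
    rw [← MonoidalCategory.leftUnitor_naturality, ← whisker_exchange_assoc, h2,
      Limits.zero_comp, Limits.comp_zero, Limits.comp_zero]
  have h4 := cok_cancel (cok_whiskerRight hSF M) h3
  rw [Limits.comp_zero] at h4
  have h5 := (λ_ M).inv ≫= h4
  simpa using h5

theorem cancel_of_SF {Y Y' : C} [ExactPairing Y Y'] (hSF : StronglyFaithful Y Y')
    {M N : C} {f g : M ⟶ N} (hfg : Y ◁ f = Y ◁ g) : f = g := by
  have h0 : Y ◁ (f - g) = 0 := by rw [wl_sub, hfg, sub_self]
  exact sub_eq_zero.mp (faithful_of_SF hSF h0)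

theorem reflectsCok_of_SF {Y Y' : C} [ExactPairing Y Y'] (hSF : StronglyFaithful Y Y') :
    ReflectsCok Y := by
  intro X₂ X₁ X₀ p q hpq
  constructor
  · exact faithful_of_SF hSF (by rw [MonoidalCategory.whiskerLeft_comp, hpq.1])
  · intro B h hph
    have h1 : (Y ◁ p) ≫ (Y ◁ h) = 0 := by
      rw [← MonoidalCategory.whiskerLeft_comp, hph, MonoidalPreadditive.whiskerLeft_zero]
    obtain ⟨s, hs, hsu⟩ := hpq.2 (Y ◁ h) h1
    have e1 := epiLike_whiskerLeft (Z := Y') (fun A a b hab => cok_cancel hpq hab)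
    have e2 := epiLike_conj (α_ Y' Y X₁) (α_ Y' Y X₀)
      (MonoidalCategory.associator_naturality_right Y' Y q) e1
    have e3 := epiLike_whiskerLeft (Z := Y' ⊗ Y) e2
    have e4 := epiLike_conj (α_ (Y' ⊗ Y) (Y' ⊗ Y) X₁) (α_ (Y' ⊗ Y) (Y' ⊗ Y) X₀)
      (MonoidalCategory.associator_naturality_right _ _ q) e3
    have key : (calE Y Y' ▷ X₀) ≫ gmap Y Y' s = 0 := by
      apply e4
      rw [Limits.comp_zero, whisker_exchange_assoc, ← gmap_precomp Y Y' q s, hs,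
        gmap_whiskerLeft, ← MonoidalCategory.comp_whiskerRight_assoc, calE_comp_ev]
      simp
    obtain ⟨u, hu, -⟩ := (cok_whiskerRight hSF X₀).2 (gmap Y Y' s) key
    have hsYt : s = Y ◁ ((λ_ X₀).inv ≫ u) := by
      apply gmap_inj Y Y'
      rw [gmap_whiskerLeft, ← hu]
      simp
    refine ⟨(λ_ X₀).inv ≫ u, ?_, ?_⟩
    · apply cancel_of_SF hSF
      rw [MonoidalCategory.whiskerLeft_comp, ← hsYt, hs]
    · intro t' ht'
      apply cancel_of_SF hSF
      have h5 : (Y ◁ q) ≫ (Y ◁ t') = Y ◁ h := by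
        rw [← MonoidalCategory.whiskerLeft_comp, ht']
      rw [hsu _ h5, hsYt]

theorem reflectsKer_of_SF {Y Y' : C} [ExactPairing Y Y'] (hSF : StronglyFaithful Y Y') :
    ReflectsKer Y := by
  intro X₀ X₁ X₂ i p hip
  constructor
  · exact faithful_of_SF hSF (by rw [MonoidalCategory.whiskerLeft_comp, hip.1])
  · intro B h hph
    have h1 : (Y ◁ h) ≫ (Y ◁ p) = 0 := by
      rw [← MonoidalCategory.whiskerLeft_comp, hph, MonoidalPreadditive.whiskerLeft_zero]
    obtain ⟨s, hs, hsu⟩ := hip.2 (Y ◁ h) h1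
    have imono : ∀ {A' : C} (a b : A' ⟶ X₀), a ≫ i = b ≫ i → a = b := by
      intro A' a b hab
      apply cancel_of_SF hSF
      apply ker_cancel hip
      rw [← MonoidalCategory.whiskerLeft_comp, ← MonoidalCategory.whiskerLeft_comp, hab]
    have key : (calE Y Y' ▷ B) ≫ gmap Y Y' s = 0 := by
      apply imono
      rw [Limits.zero_comp, Category.assoc, ← gmap_postcomp Y Y' s i, hs,
        gmap_whiskerLeft, ← MonoidalCategory.comp_whiskerRight_assoc, calE_comp_ev]
      simp
    obtain ⟨u, hu, -⟩ := (cok_whiskerRight hSF B).2 (gmap Y Y' s) key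
    have hsYt : s = Y ◁ ((λ_ B).inv ≫ u) := by
      apply gmap_inj Y Y'
      rw [gmap_whiskerLeft, ← hu]
      simp
    refine ⟨(λ_ B).inv ≫ u, ?_, ?_⟩
    · apply cancel_of_SF hSF
      rw [MonoidalCategory.whiskerLeft_comp, ← hsYt, hs]
    · intro t' ht'
      apply cancel_of_SF hSF
      have h5 : (Y ◁ t') ≫ (Y ◁ i) = Y ◁ h := by
        rw [← MonoidalCategory.whiskerLeft_comp, ht']
      rw [hsu _ h5, hsYt]

theorem cok_tensor_to_nested {Z W X₂ X₁ X₀ : C} {p : X₂ ⟶ X₁} {q : X₁ ⟶ X₀}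
    (h : IsCokernelSeq ((Z ⊗ W) ◁ p) ((Z ⊗ W) ◁ q)) :
    IsCokernelSeq (Z ◁ (W ◁ p)) (Z ◁ (W ◁ q)) :=
  cok_of_iso (α_ Z W X₂).symm (α_ Z W X₁).symm (α_ Z W X₀).symm
    (MonoidalCategory.associator_inv_naturality_right Z W p)
    (MonoidalCategory.associator_inv_naturality_right Z W q) h

theorem cok_nested_to_tensor {Z W X₂ X₁ X₀ : C} {p : X₂ ⟶ X₁} {q : X₁ ⟶ X₀}
    (h : IsCokernelSeq (Z ◁ (W ◁ p)) (Z ◁ (W ◁ q))) :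
    IsCokernelSeq ((Z ⊗ W) ◁ p) ((Z ⊗ W) ◁ q) :=
  cok_of_iso (α_ Z W X₂) (α_ Z W X₁) (α_ Z W X₀)
    (MonoidalCategory.associator_naturality_right Z W p)
    (MonoidalCategory.associator_naturality_right Z W q) h

theorem cok_whiskerLeft_of_iso {Z Z' X₂ X₁ X₀ : C} (e : Z' ≅ Z) {p : X₂ ⟶ X₁} {q : X₁ ⟶ X₀}
    (h : IsCokernelSeq (Z ◁ p) (Z ◁ q)) : IsCokernelSeq (Z' ◁ p) (Z' ◁ q) :=
  cok_of_iso (whiskerRightIso e X₂) (whiskerRightIso e X₁) (whiskerRightIso e X₀)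
    (whisker_exchange e.hom p) (whisker_exchange e.hom q) h

theorem SF_swap {Y Y' : C} [ExactPairing Y Y'] (hSF : StronglyFaithful Y Y') :
    @StronglyFaithful _ _ _ _ Y' Y (BraidedCategory.exactPairing_swap Y Y') := by
  letI inst := BraidedCategory.exactPairing_swap Y Y'
  have hev : (ε_ Y' Y : Y ⊗ Y' ⟶ 𝟙_ C) = (β_ Y Y').hom ≫ ε_ Y Y' := rfl
  have hp : calE Y' Y ≫ (β_ Y Y').hom =
      (tensorIso (β_ Y Y') (β_ Y Y')).hom ≫ calE Y Y' := by
    simp only [calE, hev, MonoidalCategory.tensorIso_hom, MonoidalCategory.tensorHom_def,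
      MonoidalCategory.comp_whiskerRight, MonoidalCategory.whiskerLeft_comp,
      Preadditive.sub_comp, Preadditive.comp_sub, Category.assoc]
    congr 1
    · rw [whisker_exchange_assoc]
      simp
    · rw [← whisker_exchange_assoc, ← whisker_exchange_assoc]
      simp
  exact cok_of_iso (tensorIso (β_ Y Y') (β_ Y Y')) (β_ Y Y') (Iso.refl _)
    hp (by rw [hev]; simp) hSF

end BraidCore

/-- `X` is strongly faithful iff `X ⊗ X⁰` reflects cokernels, iff
`X` reflects both kernels and cokernels. -/
theorem stmt12 {k : Type*} [Field k] {C : Type u} [Category.{v} C] [Preadditive C]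
    [Linear k C] [MonoidalCategory C] [SymmetricCategory C] [MonoidalPreadditive C]
    [MonoidalLinear k C] [RigidCategory C] [IsIdempotentComplete C]
    (hEnd : Function.Bijective fun a : k => a • (𝟙 (𝟙_ C)))
    (X Xd : C) [ExactPairing X Xd] :
    (StronglyFaithful X Xd ↔ ReflectsCok (X ⊗ Xd)) ∧
      (StronglyFaithful X Xd ↔ (ReflectsKer X ∧ ReflectsCok X)) := by
  constructor
  · constructor
    · intro hSF
      intro X₂ X₁ X₀ p q hpq
      have h1 := cok_tensor_to_nested (Z := X) (W := Xd) hpq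
      have h2 := reflectsCok_of_SF hSF _ _ h1
      letI : ExactPairing Xd X := BraidedCategory.exactPairing_swap X Xd
      exact reflectsCok_of_SF (Y := Xd) (Y' := X) (SF_swap hSF) p q h2
    · intro hrc
      have h1 := split_whisker X Xd
      have h2 := cok_whiskerLeft (Z := Xd) h1
      have h3 := cok_nested_to_tensor (Z := Xd) (W := X) h2
      have h4 := cok_whiskerLeft_of_iso (β_ X Xd) h3
      exact hrc _ _ h4
  · constructor
    · intro hSF
      exact ⟨reflectsKer_of_SF hSF, reflectsCok_of_SF hSF⟩
    · rintro ⟨-, hrc⟩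
      exact hrc _ _ (split_whisker X Xd)
end

section
/- In a pseudo-tensor category 𝒟, objects X and Y are both strongly faithful if and only if X ⊗ Y is strongly faithful. -/
open CategoryTheory CategoryTheory.Limits CategoryTheory.MonoidalCategory

universe v u

set_option linter.unusedSectionVars false
set_option maxHeartbeats 1600000

namespace Stmt13Aux

variable {C : Type u} [Category.{v} C] [Preadditive C] [MonoidalCategory C]
  [MonoidalPreadditive C]

/-- cancellation from a cokernel sequence -/
lemma cokCancel {M₂ M₁ M₀ : C} {p : M₂ ⟶ M₁} {q : M₁ ⟶ M₀} (h : IsCokernelSeq p q)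
    {T : C} (a b : M₀ ⟶ T) (hab : q ≫ a = q ≫ b) : a = b := by
  obtain ⟨t, _, hu⟩ := h.2 (q ≫ a) (by rw [← Category.assoc, h.1, Limits.zero_comp])
  exact (hu a rfl).trans (hu b hab.symm).symm

/-- transport a cokernel sequence along isomorphisms -/
lemma cokOfIso {M₂ M₁ M₀ M₂' M₁' M₀' : C} {p : M₂ ⟶ M₁} {q : M₁ ⟶ M₀}
    (h : IsCokernelSeq p q) (i₂ : M₂' ≅ M₂) (i₁ : M₁' ≅ M₁) (i₀ : M₀' ≅ M₀)
    {p' : M₂' ⟶ M₁'} {q' : M₁' ⟶ M₀'}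
    (hp : p' = i₂.hom ≫ p ≫ i₁.inv) (hq : q' = i₁.hom ≫ q ≫ i₀.inv) :
    IsCokernelSeq p' q' := by
  subst hp hq
  constructor
  · simp [reassoc_of% h.1]
  · intro T H hz
    have hz' : p ≫ (i₁.inv ≫ H) = 0 := by
      have : i₂.inv ≫ (i₂.hom ≫ p ≫ i₁.inv) ≫ H = 0 := by rw [hz, Limits.comp_zero]
      simpa using this
    obtain ⟨t, ht, hu⟩ := h.2 _ hz'
    refine ⟨i₀.hom ≫ t, by simp [ht], ?_⟩
    intro y hy
    have : q ≫ (i₀.inv ≫ y) = i₁.inv ≫ H := by rw [← hy]; simp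
    have := hu _ this
    rw [← this]; simp

noncomputable section

lemma tlhe_comp {W M M' T : C} [HasLeftDual W] (g : M ⟶ M') (f : W ⊗ M' ⟶ T) :
    (tensorLeftHomEquiv M (ᘁW) W T) (W ◁ g ≫ f) = g ≫ (tensorLeftHomEquiv M' (ᘁW) W T) f := by
  apply (tensorLeftHomEquiv M (ᘁW) W T).symm.injective
  rw [Equiv.symm_apply_apply, tensorLeftHomEquiv_symm_naturality, Equiv.symm_apply_apply]

lemma trhe_comp {W M M' T : C} [HasRightDual W] (g : M ⟶ M') (f : M' ⊗ W ⟶ T) :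
    (tensorRightHomEquiv M W (Wᘁ) T) (g ▷ W ≫ f) = g ≫ (tensorRightHomEquiv M' W (Wᘁ) T) f := by
  apply (tensorRightHomEquiv M W (Wᘁ) T).symm.injective
  rw [Equiv.symm_apply_apply, tensorRightHomEquiv_symm_naturality, Equiv.symm_apply_apply]

lemma tlhe_symm_zero {M Y Y' T : C} [ExactPairing Y Y'] :
    (tensorLeftHomEquiv M Y Y' T).symm 0 = 0 := by
  simp [tensorLeftHomEquiv]

lemma trhe_symm_zero {M Y Y' T : C} [ExactPairing Y Y'] :
    (tensorRightHomEquiv M Y Y' T).symm 0 = 0 := by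
  simp [tensorRightHomEquiv]

/-- left whiskering preserves cokernel sequences -/
lemma presL (W : C) [HasLeftDual W] {M₂ M₁ M₀ : C} {p : M₂ ⟶ M₁} {q : M₁ ⟶ M₀}
    (h : IsCokernelSeq p q) : IsCokernelSeq (W ◁ p) (W ◁ q) := by
  constructor
  · rw [← MonoidalCategory.whiskerLeft_comp, h.1, MonoidalPreadditive.whiskerLeft_zero]
  · intro T H hH
    set H' : M₁ ⟶ (ᘁW : C) ⊗ T := (tensorLeftHomEquiv M₁ (ᘁW) W T) H with hH'
    have hpH' : p ≫ H' = 0 := by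
      apply (tensorLeftHomEquiv M₂ (ᘁW) W T).symm.injective
      rw [tensorLeftHomEquiv_symm_naturality, hH', Equiv.symm_apply_apply, hH, tlhe_symm_zero]
    obtain ⟨u, hu, huu⟩ := h.2 _ hpH'
    refine ⟨(tensorLeftHomEquiv M₀ (ᘁW) W T).symm u, ?_, ?_⟩
    · show W ◁ q ≫ _ = H
      rw [← tensorLeftHomEquiv_symm_naturality, hu, hH', Equiv.symm_apply_apply]
    · intro y hy
      apply (tensorLeftHomEquiv M₀ (ᘁW) W T).injective
      rw [Equiv.apply_symm_apply]
      apply huu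
      rw [← tlhe_comp, hy, hH']

/-- right whiskering preserves cokernel sequences -/
lemma presR (W : C) [HasRightDual W] {M₂ M₁ M₀ : C} {p : M₂ ⟶ M₁} {q : M₁ ⟶ M₀}
    (h : IsCokernelSeq p q) : IsCokernelSeq (p ▷ W) (q ▷ W) := by
  constructor
  · rw [← MonoidalCategory.comp_whiskerRight, h.1, MonoidalPreadditive.zero_whiskerRight]
  · intro T H hH
    set H' : M₁ ⟶ T ⊗ (Wᘁ : C) := (tensorRightHomEquiv M₁ W (Wᘁ) T) H with hH'
    have hpH' : p ≫ H' = 0 := by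
      apply (tensorRightHomEquiv M₂ W (Wᘁ) T).symm.injective
      rw [tensorRightHomEquiv_symm_naturality, hH', Equiv.symm_apply_apply, hH, trhe_symm_zero]
    obtain ⟨u, hu, huu⟩ := h.2 _ hpH'
    refine ⟨(tensorRightHomEquiv M₀ W (Wᘁ) T).symm u, ?_, ?_⟩
    · show q ▷ W ≫ _ = H
      rw [← tensorRightHomEquiv_symm_naturality, hu, hH', Equiv.symm_apply_apply]
    · intro y hy
      apply (tensorRightHomEquiv M₀ W (Wᘁ) T).injective
      rw [Equiv.apply_symm_apply]
      apply huu
      rw [← trhe_comp, hy, hH']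

/-- left whiskering preserves cancellation (epis) -/
lemma cancelL (W : C) [HasLeftDual W] {M₁ M₀ : C} {q : M₁ ⟶ M₀}
    (hq : ∀ {T : C} (a b : M₀ ⟶ T), q ≫ a = q ≫ b → a = b)
    {T : C} (a b : W ⊗ M₀ ⟶ T) (hab : W ◁ q ≫ a = W ◁ q ≫ b) : a = b := by
  apply (tensorLeftHomEquiv M₀ (ᘁW) W T).injective
  apply hq
  rw [← tlhe_comp, ← tlhe_comp, hab]

/-- right whiskering preserves cancellation (epis) -/
lemma cancelR (W : C) [HasRightDual W] {M₁ M₀ : C} {q : M₁ ⟶ M₀}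
    (hq : ∀ {T : C} (a b : M₀ ⟶ T), q ≫ a = q ≫ b → a = b)
    {T : C} (a b : M₀ ⊗ W ⟶ T) (hab : q ▷ W ≫ a = q ▷ W ≫ b) : a = b := by
  apply (tensorRightHomEquiv M₀ W (Wᘁ) T).injective
  apply hq
  rw [← trhe_comp, ← trhe_comp, hab]

/-- abstract version of `calE` for any `e : A ⟶ 𝟙`. -/
def calEa (A : C) (e : A ⟶ 𝟙_ C) : A ⊗ A ⟶ A :=
  (e ▷ A) ≫ (λ_ A).hom - (A ◁ e) ≫ (ρ_ A).hom

lemma calE_eq_calEa (X Xd : C) [ExactPairing X Xd] :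
    calE X Xd = calEa (Xd ⊗ X) (ε_ X Xd) := rfl

lemma whiskerLeft_sub (W : C) {M N : C} (f g : M ⟶ N) :
    W ◁ (f - g) = W ◁ f - W ◁ g := by
  rw [eq_sub_iff_add_eq, ← MonoidalPreadditive.whiskerLeft_add, sub_add_cancel]

lemma calEa_comp (A : C) (e : A ⟶ 𝟙_ C) : calEa A e ≫ e = 0 := by
  simp only [calEa, Preadditive.sub_comp, Category.assoc]
  rw [sub_eq_zero, ← leftUnitor_naturality, ← rightUnitor_naturality,
    ← whisker_exchange_assoc, unitors_equal]

/-- For any `d` splitting `e` in the second strand, `A ◁ e` is the cokernel of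
`A ◁ calEa A e`. -/
lemma splitCoker (A : C) (e : A ⟶ 𝟙_ C) (d : A ⟶ A ⊗ A)
    (h2 : d ≫ (A ◁ e) ≫ (ρ_ A).hom = 𝟙 A) :
    IsCokernelSeq (A ◁ calEa A e) (A ◁ e) := by
  have hd : d ≫ A ◁ e = (ρ_ A).inv := by
    have := congrArg (· ≫ (ρ_ A).inv) h2
    simpa [Category.assoc] using this
  constructor
  · rw [← MonoidalCategory.whiskerLeft_comp, calEa_comp, MonoidalPreadditive.whiskerLeft_zero]
  · intro T H hbal0
    have hbal : A ◁ (e ▷ A) ≫ A ◁ (λ_ A).hom ≫ H = A ◁ (A ◁ e) ≫ A ◁ (ρ_ A).hom ≫ H := by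
      have h0 : A ◁ calEa A e ≫ H = 0 := hbal0
      rw [calEa, whiskerLeft_sub, Preadditive.sub_comp, sub_eq_zero] at h0
      simpa [MonoidalCategory.whiskerLeft_comp, Category.assoc] using h0
    have key : A ◁ e ≫ (ρ_ A).hom ≫ d ≫ H = H := by
      calc A ◁ e ≫ (ρ_ A).hom ≫ d ≫ H
          = A ◁ e ≫ d ▷ 𝟙_ C ≫ (ρ_ (A ⊗ A)).hom ≫ H := by
            rw [← MonoidalCategory.rightUnitor_naturality_assoc]
        _ = d ▷ A ≫ (A ⊗ A) ◁ e ≫ (ρ_ (A ⊗ A)).hom ≫ H := by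
            rw [← whisker_exchange_assoc]
        _ = d ▷ A ≫ (α_ A A A).hom ≫ A ◁ (A ◁ e) ≫ (α_ A A (𝟙_ C)).inv ≫
              (ρ_ (A ⊗ A)).hom ≫ H := by
            rw [tensor_whiskerLeft]; simp only [Category.assoc]
        _ = d ▷ A ≫ (α_ A A A).hom ≫ A ◁ (A ◁ e) ≫ A ◁ (ρ_ A).hom ≫ H := by
            rw [whiskerLeft_rightUnitor]; simp only [Category.assoc]
        _ = d ▷ A ≫ (α_ A A A).hom ≫ A ◁ (e ▷ A) ≫ A ◁ (λ_ A).hom ≫ H := by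
            rw [← hbal]
        _ = d ▷ A ≫ (A ◁ e) ▷ A ≫ (α_ A (𝟙_ C) A).hom ≫ A ◁ (λ_ A).hom ≫ H := by
            rw [← associator_naturality_middle_assoc]
        _ = d ▷ A ≫ (A ◁ e) ▷ A ≫ (ρ_ A).hom ▷ A ≫ H := by
            rw [MonoidalCategory.triangle_assoc]
        _ = ((d ≫ A ◁ e ≫ (ρ_ A).hom) ▷ A) ≫ H := by
            simp only [MonoidalCategory.comp_whiskerRight, Category.assoc]
        _ = H := by rw [h2]; simp
    refine ⟨(ρ_ A).hom ≫ d ≫ H, key, ?_⟩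
    intro y hy
    calc y = (ρ_ A).hom ≫ (ρ_ A).inv ≫ y := by simp
      _ = (ρ_ A).hom ≫ d ≫ A ◁ e ≫ y := by rw [← hd]; simp only [Category.assoc]
      _ = (ρ_ A).hom ≫ d ≫ H := by rw [hy]

/-- The "comultiplication" of `Xd ⊗ X` obtained by inserting a coevaluation. -/
def dmor (X Xd : C) [ExactPairing X Xd] : Xd ⊗ X ⟶ (Xd ⊗ X) ⊗ (Xd ⊗ X) :=
  𝟙 (Xd ⊗ X) ⊗≫ Xd ◁ η_ X Xd ▷ X ⊗≫ 𝟙 ((Xd ⊗ X) ⊗ (Xd ⊗ X))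

lemma dmor_h2 (X Xd : C) [ExactPairing X Xd] :
    dmor X Xd ≫ ((Xd ⊗ X) ◁ ε_ X Xd) ≫ (ρ_ (Xd ⊗ X)).hom = 𝟙 (Xd ⊗ X) := by
  calc dmor X Xd ≫ ((Xd ⊗ X) ◁ ε_ X Xd) ≫ (ρ_ (Xd ⊗ X)).hom
      = 𝟙 (Xd ⊗ X) ⊗≫ Xd ◁ (η_ X Xd ▷ X ⊗≫ X ◁ ε_ X Xd) ⊗≫ 𝟙 (Xd ⊗ X) := by
        rw [dmor]; monoidal
    _ = 𝟙 (Xd ⊗ X) := by rw [ExactPairing.evaluation_coevaluation'']; monoidal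

/-- W ⊗ — reflects cokernel sequences -/
def Refl (W : C) : Prop := ∀ ⦃M₂ M₁ M₀ : C⦄ (p : M₂ ⟶ M₁) (q : M₁ ⟶ M₀),
  IsCokernelSeq (W ◁ p) (W ◁ q) → IsCokernelSeq p q

section Rigid
variable [RigidCategory C]

lemma refl_of_sf {A : C} {e : A ⟶ 𝟙_ C} (hSF : IsCokernelSeq (calEa A e) e) : Refl A := by
  intro M₂ M₁ M₀ p q hpq
  have he : ∀ {T : C} (a b : 𝟙_ C ⟶ T), e ≫ a = e ≫ b → a = b :=
    fun a b hab => cokCancel hSF a b hab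
  have hq' : ∀ {T : C} (a b : A ⊗ M₀ ⟶ T), A ◁ q ≫ a = A ◁ q ≫ b → a = b :=
    fun a b hab => cokCancel hpq a b hab
  have exch : ∀ {M N : C} (f : M ⟶ N),
      e ▷ M ≫ (λ_ M).hom ≫ f = A ◁ f ≫ e ▷ N ≫ (λ_ N).hom := by
    intro M N f
    rw [whisker_exchange_assoc, leftUnitor_naturality]
  have hc : ∀ {M N : C} (f g : M ⟶ N), A ◁ f = A ◁ g → f = g := by
    intro M N f g hfg
    have h1 := exch f
    have h2 := exch g
    rw [hfg] at h1
    have h3 : e ▷ M ≫ (λ_ M).hom ≫ f = e ▷ M ≫ (λ_ M).hom ≫ g := h1.trans h2.symm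
    have h4 := cancelR M (fun a b hab => he a b hab) _ _ h3
    simpa using h4
  have hq0 : ∀ {T : C} (a b : M₀ ⟶ T), q ≫ a = q ≫ b → a = b := by
    intro T a b hab
    apply hc
    apply hq'
    rw [← MonoidalCategory.whiskerLeft_comp, ← MonoidalCategory.whiskerLeft_comp, hab]
  constructor
  · apply hc
    rw [MonoidalCategory.whiskerLeft_comp]
    rw [show A ◁ p ≫ A ◁ q = 0 from hpq.1, MonoidalPreadditive.whiskerLeft_zero]
  · intro T h hph
    obtain ⟨s, hs, _⟩ := hpq.2 (A ◁ h)
      (by rw [← MonoidalCategory.whiskerLeft_comp, hph, MonoidalPreadditive.whiskerLeft_zero])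
    set φ : A ⊗ M₀ ⟶ T := s ≫ e ▷ T ≫ (λ_ T).hom with hφ
    have hSFM : IsCokernelSeq (calEa A e ▷ M₀) (e ▷ M₀) := presR M₀ hSF
    have hq2 : ∀ {T' : C} (a b : A ⊗ (A ⊗ M₀) ⟶ T'),
        A ◁ (A ◁ q) ≫ a = A ◁ (A ◁ q) ≫ b → a = b :=
      fun a b hab => cancelL A hq' a b hab
    have hφ0 : calEa A e ▷ M₀ ≫ φ = 0 := by
      have hα : A ◁ (A ◁ q) ≫ (α_ A A M₀).inv ≫ calEa A e ▷ M₀ ≫ φ = 0 := by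
        calc A ◁ (A ◁ q) ≫ (α_ A A M₀).inv ≫ calEa A e ▷ M₀ ≫ φ
            = (α_ A A M₁).inv ≫ (A ⊗ A) ◁ q ≫ calEa A e ▷ M₀ ≫ φ := by
              rw [associator_inv_naturality_right_assoc]
          _ = (α_ A A M₁).inv ≫ calEa A e ▷ M₁ ≫ A ◁ q ≫ φ := by
              rw [whisker_exchange_assoc]
          _ = (α_ A A M₁).inv ≫ calEa A e ▷ M₁ ≫ A ◁ h ≫ e ▷ T ≫ (λ_ T).hom := by
              rw [hφ, reassoc_of% hs]
          _ = (α_ A A M₁).inv ≫ (A ⊗ A) ◁ h ≫ (calEa A e ≫ e) ▷ T ≫ (λ_ T).hom := by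
              rw [← whisker_exchange_assoc, MonoidalCategory.comp_whiskerRight]
              simp only [Category.assoc]
          _ = 0 := by rw [calEa_comp]; simp
      have h5 : (α_ A A M₀).inv ≫ calEa A e ▷ M₀ ≫ φ = 0 := by
        apply hq2
        rw [hα, Limits.comp_zero]
      have := congrArg ((α_ A A M₀).hom ≫ ·) h5
      simpa using this
    obtain ⟨t', ht', _⟩ := hSFM.2 φ hφ0
    have hmain : q ≫ ((λ_ M₀).inv ≫ t') = h := by
      have chain : e ▷ M₁ ≫ (λ_ M₁).hom ≫ (q ≫ ((λ_ M₀).inv ≫ t')) =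
          e ▷ M₁ ≫ (λ_ M₁).hom ≫ h := by
        calc e ▷ M₁ ≫ (λ_ M₁).hom ≫ (q ≫ ((λ_ M₀).inv ≫ t'))
            = e ▷ M₁ ≫ 𝟙_ C ◁ q ≫ (λ_ M₀).hom ≫ (λ_ M₀).inv ≫ t' := by
              rw [← leftUnitor_naturality_assoc]
          _ = e ▷ M₁ ≫ 𝟙_ C ◁ q ≫ t' := by simp
          _ = A ◁ q ≫ e ▷ M₀ ≫ t' := by rw [← whisker_exchange_assoc]
          _ = A ◁ q ≫ φ := by rw [ht']
          _ = A ◁ h ≫ e ▷ T ≫ (λ_ T).hom := by rw [hφ, reassoc_of% hs]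
          _ = e ▷ M₁ ≫ 𝟙_ C ◁ h ≫ (λ_ T).hom := by rw [whisker_exchange_assoc]
          _ = e ▷ M₁ ≫ (λ_ M₁).hom ≫ h := by rw [leftUnitor_naturality]
      have c1 := cancelR M₁ (fun a b hab => he a b hab) _ _ chain
      exact (cancel_epi (λ_ M₁).hom).mp c1
    exact ⟨(λ_ M₀).inv ≫ t', hmain, fun y hy => hq0 y _ (hy.trans hmain.symm)⟩

lemma refl_tensor {Z W : C} (hZ : Refl Z) (hW : Refl W) : Refl (Z ⊗ W) := by
  intro M₂ M₁ M₀ p q h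
  apply hW p q
  apply hZ (W ◁ p) (W ◁ q)
  exact cokOfIso h (α_ Z W M₂).symm (α_ Z W M₁).symm (α_ Z W M₀).symm (by simp) (by simp)

lemma refl_right {Z W : C} (hZW : Refl (Z ⊗ W)) : Refl W := by
  intro M₂ M₁ M₀ p q h
  apply hZW p q
  exact cokOfIso (presL Z h) (α_ Z W M₂) (α_ Z W M₁) (α_ Z W M₀) (by simp) (by simp)

lemma refl_left [BraidedCategory C] {Z W : C} (hZW : Refl (Z ⊗ W)) : Refl Z := by
  intro M₂ M₁ M₀ p q h
  apply hZW p q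
  have h'' : IsCokernelSeq ((W ⊗ Z) ◁ p) ((W ⊗ Z) ◁ q) :=
    cokOfIso (presL W h) (α_ W Z M₂) (α_ W Z M₁) (α_ W Z M₀) (by simp) (by simp)
  exact cokOfIso h'' (whiskerRightIso (β_ W Z) M₂).symm (whiskerRightIso (β_ W Z) M₁).symm
    (whiskerRightIso (β_ W Z) M₀).symm
    (by simp only [Iso.symm_hom, Iso.symm_inv, whiskerRightIso_hom, whiskerRightIso_inv]
        rw [whisker_exchange]; simp)
    (by simp only [Iso.symm_hom, Iso.symm_inv, whiskerRightIso_hom, whiskerRightIso_inv]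
        rw [whisker_exchange]; simp)

lemma sf_iff_refl (X Xd : C) [ExactPairing X Xd] :
    StronglyFaithful X Xd ↔ Refl (Xd ⊗ X) := by
  constructor
  · intro h
    have h' : IsCokernelSeq (calEa (Xd ⊗ X) (ε_ X Xd)) (ε_ X Xd) := by
      rw [← calE_eq_calEa]; exact h
    exact refl_of_sf h'
  · intro hR
    have := hR _ _ (splitCoker (Xd ⊗ X) (ε_ X Xd) (dmor X Xd) (dmor_h2 X Xd))
    rw [StronglyFaithful, calE_eq_calEa]
    exact this

end Rigid
end
end Stmt13Aux

open Stmt13Aux in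
/-- `X` and `Y` are both strongly faithful iff `X ⊗ Y` (with dual
`Y⁰ ⊗ X⁰`) is strongly faithful. -/
theorem stmt13 {k : Type*} [Field k] {C : Type u} [Category.{v} C] [Preadditive C]
    [Linear k C] [MonoidalCategory C] [SymmetricCategory C] [MonoidalPreadditive C]
    [MonoidalLinear k C] [RigidCategory C] [IsIdempotentComplete C]
    (hEnd : Function.Bijective fun a : k => a • (𝟙 (𝟙_ C)))
    (X Xd Y Yd : C) [ExactPairing X Xd] [ExactPairing Y Yd]
    [ExactPairing (X ⊗ Y) (Yd ⊗ Xd)] :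
    (StronglyFaithful X Xd ∧ StronglyFaithful Y Yd) ↔
      StronglyFaithful (X ⊗ Y) (Yd ⊗ Xd) := by
  constructor
  · rintro ⟨hX, hY⟩
    have rX := (sf_iff_refl X Xd).mp hX
    have rY := (sf_iff_refl Y Yd).mp hY
    have rXd : Refl Xd := refl_left rX
    have rX' : Refl X := refl_right rX
    have rYd : Refl Yd := refl_left rY
    have rY' : Refl Y := refl_right rY
    exact (sf_iff_refl (X ⊗ Y) (Yd ⊗ Xd)).mpr
      (refl_tensor (refl_tensor rYd rXd) (refl_tensor rX' rY'))
  · intro hXY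
    have r := (sf_iff_refl (X ⊗ Y) (Yd ⊗ Xd)).mp hXY
    have rXY : Refl (X ⊗ Y) := refl_right r
    have rYdXd : Refl (Yd ⊗ Xd) := refl_left r
    exact ⟨(sf_iff_refl X Xd).mpr (refl_tensor (refl_right rYdXd) (refl_left rXY)),
      (sf_iff_refl Y Yd).mpr (refl_tensor (refl_left rYdXd) (refl_right rXY))⟩
end

section
/- In a pseudo-tensor category 𝒟 over k, if an object X has dim X ≠ 0 (where dim X = ev_X ∘ σ_{X,X⁰} ∘ co_X ∈ End(𝟙) ≅ k), then X is strongly faithful; explicitly, setting f := (1/dim X)·σ_{X,X⁰} ∘ co_X : 𝟙 → X⁰ ⊗ X and h := (f ⊗ f) ∘ ev_X − id_{X⁰⊗X} ⊗ f : X⁰⊗X → X⁰⊗X⊗X⁰⊗X, the sequence γ_X is split exact. -/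
/-!
Dividing `σ ∘ co_X` by `dim X ≠ 0` gives a section `f` of `ev_X`. Any section `f` of a morphism
`e : Y ⟶ 𝟙` makes `h := (f ⊗ f) ∘ e − id ⊗ f` a contracting homotopy of `Y ⊗ Y ⟶ Y ⟶ 𝟙 ⟶ 0`,
because `e ⊗ id` and `id ⊗ e` both absorb `f` into the identity; a complex split in this way
is exact.
-/

open CategoryTheory CategoryTheory.Limits CategoryTheory.MonoidalCategory

universe v u

namespace CategoryTheory.MonoidalCategory

variable {C : Type u} [Category.{v} C] [Preadditive C] [MonoidalCategory C]

/-- `calE X Xd` is `whiskerDiff (ε_ X Xd)`. -/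
def whiskerDiff {Y : C} (e : Y ⟶ 𝟙_ C) : Y ⊗ Y ⟶ Y :=
  e ▷ Y ≫ (λ_ Y).hom - Y ◁ e ≫ (ρ_ Y).hom

theorem whiskerDiff_comp {Y : C} (e : Y ⟶ 𝟙_ C) : whiskerDiff e ≫ e = 0 := by
  have hl : (λ_ Y).hom ≫ e = (𝟙_ C ◁ e) ≫ (λ_ (𝟙_ C)).hom := by simp
  have hr : (ρ_ Y).hom ≫ e = (e ▷ 𝟙_ C) ≫ (ρ_ (𝟙_ C)).hom := by simp
  rw [whiskerDiff, Preadditive.sub_comp, Category.assoc, Category.assoc, hl, hr,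
    ← Category.assoc, ← Category.assoc, ← whisker_exchange, unitors_equal, sub_self]

theorem comp_whiskerDiff_add_comp_eq_id {Y : C} {e : Y ⟶ 𝟙_ C} {f : 𝟙_ C ⟶ Y} (hf : f ≫ e = 𝟙 _) :
    (e ≫ (λ_ (𝟙_ C)).inv ≫ (f ⊗ₘ f) - (ρ_ Y).inv ≫ (Y ◁ f)) ≫ whiskerDiff e + e ≫ f =
      𝟙 Y := by
  have h₁ : (e ≫ (λ_ (𝟙_ C)).inv ≫ (f ⊗ₘ f)) ≫ e ▷ Y ≫ (λ_ Y).hom = e ≫ f := by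
    rw [tensorHom_def]
    slice_lhs 4 5 => rw [whisker_exchange]
    slice_lhs 3 4 => rw [← comp_whiskerRight, hf]
    simp
  have h₂ : (e ≫ (λ_ (𝟙_ C)).inv ≫ (f ⊗ₘ f)) ≫ Y ◁ e ≫ (ρ_ Y).hom = e ≫ f := by
    rw [tensorHom_def]
    slice_lhs 4 5 => rw [← whiskerLeft_comp, hf]
    simp [unitors_inv_equal]
  have h₃ : ((ρ_ Y).inv ≫ (Y ◁ f)) ≫ e ▷ Y ≫ (λ_ Y).hom = e ≫ f := by
    slice_lhs 2 3 => rw [whisker_exchange]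
    simp [unitors_equal]
  have h₄ : ((ρ_ Y).inv ≫ (Y ◁ f)) ≫ Y ◁ e ≫ (ρ_ Y).hom = 𝟙 Y := by
    slice_lhs 2 3 => rw [← whiskerLeft_comp, hf]
    simp
  rw [whiskerDiff, Preadditive.sub_comp, Preadditive.comp_sub, Preadditive.comp_sub,
    h₁, h₂, h₃, h₄]
  abel

end CategoryTheory.MonoidalCategory

theorem isCokernelSeq_of_split {C : Type u} [Category.{v} C] [Preadditive C] {X₂ X₁ X₀ : C}
    {p : X₂ ⟶ X₁} {q : X₁ ⟶ X₀} {s : X₀ ⟶ X₁} {h : X₁ ⟶ X₂} (hpq : p ≫ q = 0)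
    (hs : s ≫ q = 𝟙 X₀) (hh : h ≫ p + q ≫ s = 𝟙 X₁) : IsCokernelSeq p q := by
  refine ⟨hpq, fun A g hg => ⟨s ≫ g, ?_, fun t ht => ?_⟩⟩
  · simpa [Preadditive.add_comp, hg] using congrArg (· ≫ g) hh
  · rw [← ht, reassoc_of% hs]

theorem stmt14_general {k : Type*} [Field k] {C : Type u} [Category.{v} C] [Preadditive C]
    [Linear k C] [MonoidalCategory C] [SymmetricCategory C]
    (X Xd : C) [ExactPairing X Xd] (d : k)
    (hd : η_ X Xd ≫ (β_ X Xd).hom ≫ ε_ X Xd = d • 𝟙 (𝟙_ C)) (hd0 : d ≠ 0) :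
    let f : 𝟙_ C ⟶ Xd ⊗ X := d⁻¹ • (η_ X Xd ≫ (β_ X Xd).hom)
    let h : Xd ⊗ X ⟶ (Xd ⊗ X) ⊗ (Xd ⊗ X) :=
      ε_ X Xd ≫ (λ_ (𝟙_ C)).inv ≫ (f ⊗ₘ f) - (ρ_ (Xd ⊗ X)).inv ≫ ((Xd ⊗ X) ◁ f)
    f ≫ ε_ X Xd = 𝟙 (𝟙_ C) ∧
      h ≫ calE X Xd + ε_ X Xd ≫ f = 𝟙 (Xd ⊗ X) ∧
      StronglyFaithful X Xd := by
  intro f h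
  have hf : f ≫ ε_ X Xd = 𝟙 (𝟙_ C) := by
    rw [Linear.smul_comp, Category.assoc, hd, smul_smul, inv_mul_cancel₀ hd0, one_smul]
  have hsplit : h ≫ calE X Xd + ε_ X Xd ≫ f = 𝟙 (Xd ⊗ X) :=
    comp_whiskerDiff_add_comp_eq_id hf
  exact ⟨hf, hsplit, isCokernelSeq_of_split (whiskerDiff_comp _) hf hsplit⟩

/-- If `dim X = ev_X ∘ σ ∘ co_X` equals `d • 𝟙` with `d ≠ 0` in `k`,
then `X` is strongly faithful; explicitly, with `f := d⁻¹ • (σ ∘ co_X)` and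
`h := (f ⊗ₘ f) ∘ ev_X − id ⊗ f`, the sequence `γ_X` is split exact. -/
theorem stmt14 {k : Type*} [Field k] {C : Type u} [Category.{v} C] [Preadditive C]
    [Linear k C] [MonoidalCategory C] [SymmetricCategory C] [MonoidalPreadditive C]
    [MonoidalLinear k C] [RigidCategory C] [IsIdempotentComplete C]
    (hEnd : Function.Bijective fun a : k => a • (𝟙 (𝟙_ C)))
    (X Xd : C) [ExactPairing X Xd] (d : k)
    (hd : η_ X Xd ≫ (β_ X Xd).hom ≫ ε_ X Xd = d • 𝟙 (𝟙_ C)) (hd0 : d ≠ 0) :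
    let f : 𝟙_ C ⟶ Xd ⊗ X := d⁻¹ • (η_ X Xd ≫ (β_ X Xd).hom)
    let h : Xd ⊗ X ⟶ (Xd ⊗ X) ⊗ (Xd ⊗ X) :=
      ε_ X Xd ≫ (λ_ (𝟙_ C)).inv ≫ (f ⊗ₘ f) - (ρ_ (Xd ⊗ X)).inv ≫ ((Xd ⊗ X) ◁ f)
    f ≫ ε_ X Xd = 𝟙 (𝟙_ C) ∧
      h ≫ calE X Xd + ε_ X Xd ≫ f = 𝟙 (Xd ⊗ X) ∧
      StronglyFaithful X Xd :=
  stmt14_general X Xd d hd hd0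
end

section
/- In a tensor category (k-linear abelian rigid symmetric monoidal with End(𝟙) = k), every nonzero object X is strongly faithful, i.e., ev_X : X⁰ ⊗ X → 𝟙 is the cokernel of ℰ_X := ev_X ⊗ id_{X⁰⊗X} − id_{X⁰⊗X} ⊗ ev_X. -/
open CategoryTheory CategoryTheory.Limits CategoryTheory.MonoidalCategory

universe v u

namespace Stmt15Proof

variable {C : Type u} [Category.{v} C] [MonoidalCategory C]

section Rigid
variable [RigidCategory C]

lemma epi_whiskerLeft' (Z : C) {A B : C} (f : A ⟶ B) [Epi f] : Epi (Z ◁ f) := by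
  haveI : (tensorLeft Z).IsLeftAdjoint := (tensorLeftAdjunction (ᘁZ) Z).isLeftAdjoint
  simpa using (tensorLeft Z).map_epi f

lemma epi_whiskerRight' {A B : C} (f : A ⟶ B) [Epi f] (Z : C) : Epi (f ▷ Z) := by
  haveI : (tensorRight Z).IsLeftAdjoint := (tensorRightAdjunction Z (Zᘁ)).isLeftAdjoint
  simpa using (tensorRight Z).map_epi f

end Rigid

section Braided
variable [BraidedCategory C]

lemma braiding_self_of_epi {Q : C} (q : 𝟙_ C ⟶ Q) [Epi q] [Epi (q ▷ Q)] :
    (β_ Q Q).hom = 𝟙 (Q ⊗ Q) := by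
  have key : (λ_ Q).inv ≫ q ▷ Q = (ρ_ Q).inv ≫ Q ◁ q := by
    rw [← cancel_epi q]
    calc q ≫ (λ_ Q).inv ≫ q ▷ Q
        = ((λ_ (𝟙_ C)).inv ≫ 𝟙_ C ◁ q) ≫ q ▷ Q := by
          rw [← leftUnitor_inv_naturality]; simp
      _ = (λ_ (𝟙_ C)).inv ≫ (q ▷ 𝟙_ C ≫ Q ◁ q) := by
          rw [Category.assoc, whisker_exchange]
      _ = ((ρ_ (𝟙_ C)).inv ≫ q ▷ 𝟙_ C) ≫ Q ◁ q := by
          rw [unitors_inv_equal]; simp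
      _ = q ≫ (ρ_ Q).inv ≫ Q ◁ q := by rw [← rightUnitor_inv_naturality]; simp
  have h1 : q ▷ Q ≫ (β_ Q Q).hom = q ▷ Q ≫ 𝟙 (Q ⊗ Q) := by
    rw [BraidedCategory.braiding_naturality_left q Q, braiding_tensorUnit_left,
      Category.comp_id]
    rw [Category.assoc, ← key]
    simp
  exact (cancel_epi (q ▷ Q)).1 h1

lemma unit_quotient_id_eq {Q Qd : C} [ExactPairing Q Qd] (q : 𝟙_ C ⟶ Q) [Epi q]
    [Epi (q ▷ Q)] :
    𝟙 Q = (ρ_ Q).inv ≫ (Q ◁ (η_ Q Qd ≫ (β_ Q Qd).hom ≫ ε_ Q Qd)) ≫ (ρ_ Q).hom := by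
  have hβ : (β_ Q Q).hom = 𝟙 (Q ⊗ Q) := braiding_self_of_epi q
  have hhex : Q ◁ (β_ Q Qd).hom = (β_ Q (Q ⊗ Qd)).hom ≫ (α_ Q Qd Q).hom := by
    have h := BraidedCategory.hexagon_forward Q Q Qd
    rw [hβ] at h
    simp only [id_whiskerRight, Category.id_comp] at h
    exact ((cancel_epi (α_ Q Q Qd).hom).1 h).symm
  symm
  calc (ρ_ Q).inv ≫ (Q ◁ (η_ Q Qd ≫ (β_ Q Qd).hom ≫ ε_ Q Qd)) ≫ (ρ_ Q).hom
      = (ρ_ Q).inv ≫ (Q ◁ η_ Q Qd) ≫ (Q ◁ (β_ Q Qd).hom) ≫ (Q ◁ ε_ Q Qd) ≫ (ρ_ Q).hom := by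
        simp [MonoidalCategory.whiskerLeft_comp]
    _ = (ρ_ Q).inv ≫ ((Q ◁ η_ Q Qd) ≫ (β_ Q (Q ⊗ Qd)).hom) ≫ (α_ Q Qd Q).hom ≫
          (Q ◁ ε_ Q Qd) ≫ (ρ_ Q).hom := by rw [hhex]; simp
    _ = (ρ_ Q).inv ≫ ((β_ Q (𝟙_ C)).hom ≫ (η_ Q Qd ▷ Q)) ≫ (α_ Q Qd Q).hom ≫
          (Q ◁ ε_ Q Qd) ≫ (ρ_ Q).hom := by
        rw [BraidedCategory.braiding_naturality_right]
    _ = (ρ_ Q).inv ≫ (ρ_ Q).hom ≫ (λ_ Q).inv ≫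
          ((η_ Q Qd ▷ Q) ≫ (α_ Q Qd Q).hom ≫ (Q ◁ ε_ Q Qd)) ≫ (ρ_ Q).hom := by
        rw [braiding_tensorUnit_right]; simp
    _ = 𝟙 Q := by rw [ExactPairing.evaluation_coevaluation]; simp

end Braided

section Pairing
variable (X Xd : C) [ExactPairing X Xd]

lemma zig_whisker (W : C) :
    η_ X Xd ▷ (X ⊗ W) ≫ (α_ X Xd (X ⊗ W)).hom ≫
      X ◁ ((α_ Xd X W).inv ≫ ε_ X Xd ▷ W ≫ (λ_ W).hom) = (λ_ (X ⊗ W)).hom := by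
  have step1 : η_ X Xd ▷ (X ⊗ W) =
      (α_ (𝟙_ C) X W).inv ≫ ((η_ X Xd ▷ X) ▷ W) ≫ (α_ (X ⊗ Xd) X W).hom := by
    rw [associator_naturality_left]; simp
  have step2 : (α_ (X ⊗ Xd) X W).hom ≫ (α_ X Xd (X ⊗ W)).hom ≫ (X ◁ (α_ Xd X W).inv) =
      ((α_ X Xd X).hom ▷ W) ≫ (α_ X (Xd ⊗ X) W).hom := by
    monoidal
  rw [MonoidalCategory.whiskerLeft_comp, MonoidalCategory.whiskerLeft_comp, step1]
  simp only [Category.assoc]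
  slice_lhs 3 5 => rw [step2]
  slice_lhs 4 5 => rw [← associator_naturality_middle]
  slice_lhs 5 6 => rw [MonoidalCategory.triangle]
  slice_lhs 2 5 => simp only [← comp_whiskerRight]
  rw [ExactPairing.evaluation_coevaluation_assoc]
  simp only [Iso.inv_hom_id, Category.comp_id]
  monoidal

/-- The contracting homotopy `σ`. -/
noncomputable def sigma' : X ⊗ (Xd ⊗ X) ⟶ X ⊗ ((Xd ⊗ X) ⊗ (Xd ⊗ X)) :=
  (λ_ (X ⊗ (Xd ⊗ X))).inv ≫ η_ X Xd ▷ (X ⊗ (Xd ⊗ X)) ≫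
    (α_ X Xd (X ⊗ (Xd ⊗ X))).hom ≫ X ◁ (α_ Xd X (Xd ⊗ X)).inv

/-- The section `s₀`. -/
noncomputable def s0 : X ⊗ 𝟙_ C ⟶ X ⊗ (Xd ⊗ X) :=
  (ρ_ X).hom ≫ (λ_ X).inv ≫ η_ X Xd ▷ X ≫ (α_ X Xd X).hom

lemma homotopy_A :
    sigma' X Xd ≫ (X ◁ ((ε_ X Xd ▷ (Xd ⊗ X)) ≫ (λ_ (Xd ⊗ X)).hom)) = 𝟙 (X ⊗ (Xd ⊗ X)) := by
  unfold sigma'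
  have h : η_ X Xd ▷ (X ⊗ (Xd ⊗ X)) ≫ (α_ X Xd (X ⊗ (Xd ⊗ X))).hom ≫
      X ◁ ((α_ Xd X (Xd ⊗ X)).inv ≫ ε_ X Xd ▷ (Xd ⊗ X) ≫ (λ_ (Xd ⊗ X)).hom) =
      (λ_ (X ⊗ (Xd ⊗ X))).hom := zig_whisker X Xd (Xd ⊗ X)
  simp only [MonoidalCategory.whiskerLeft_comp, Category.assoc] at h ⊢
  rw [h]
  simp

lemma homotopy_B :
    sigma' X Xd ≫ (X ◁ (((Xd ⊗ X) ◁ ε_ X Xd) ≫ (ρ_ (Xd ⊗ X)).hom)) =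
      (X ◁ ε_ X Xd) ≫ s0 X Xd := by
  unfold sigma' s0
  simp only [MonoidalCategory.whiskerLeft_comp, Category.assoc]
  slice_lhs 4 5 => rw [← MonoidalCategory.whiskerLeft_comp, ← associator_inv_naturality_right,
    MonoidalCategory.whiskerLeft_comp]
  slice_lhs 3 4 => rw [← associator_naturality_right]
  slice_lhs 2 3 => rw [← whisker_exchange]
  slice_lhs 1 2 => rw [← leftUnitor_inv_naturality]
  have b5 : (α_ X Xd (X ⊗ 𝟙_ C)).hom ≫ (X ◁ (α_ Xd X (𝟙_ C)).inv) ≫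
      (X ◁ ((ρ_ (Xd ⊗ X)).hom)) = ((X ⊗ Xd) ◁ (ρ_ X).hom) ≫ (α_ X Xd X).hom := by
    monoidal
  slice_lhs 4 6 => rw [b5]
  slice_lhs 3 4 => rw [← whisker_exchange]
  have b7 : (λ_ (X ⊗ 𝟙_ C)).inv ≫ (𝟙_ C ◁ (ρ_ X).hom) = (ρ_ X).hom ≫ (λ_ X).inv := by
    monoidal
  slice_lhs 2 3 => rw [b7]
  simp only [Category.assoc]

end Pairing

section PairingPre
variable [Preadditive C] [MonoidalPreadditive C] (X Xd : C) [ExactPairing X Xd]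

omit [MonoidalPreadditive C] in
lemma calE_comp_evaluation : calE X Xd ≫ ε_ X Xd = 0 := by
  unfold calE
  rw [Preadditive.sub_comp]
  rw [sub_eq_zero]
  calc (ε_ X Xd ▷ (Xd ⊗ X) ≫ (λ_ (Xd ⊗ X)).hom) ≫ ε_ X Xd
      = ε_ X Xd ▷ (Xd ⊗ X) ≫ 𝟙_ C ◁ ε_ X Xd ≫ (λ_ (𝟙_ C)).hom := by
        rw [Category.assoc, leftUnitor_naturality]
    _ = ((Xd ⊗ X) ◁ ε_ X Xd) ≫ ε_ X Xd ▷ 𝟙_ C ≫ (ρ_ (𝟙_ C)).hom := by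
        rw [← Category.assoc, ← whisker_exchange, unitors_equal]
        simp
    _ = (((Xd ⊗ X) ◁ ε_ X Xd) ≫ (ρ_ (Xd ⊗ X)).hom) ≫ ε_ X Xd := by
        rw [Category.assoc, rightUnitor_naturality]

/-- The combined homotopy identity. -/
lemma homotopy_identity :
    sigma' X Xd ≫ (X ◁ calE X Xd) = 𝟙 (X ⊗ (Xd ⊗ X)) - (X ◁ ε_ X Xd) ≫ s0 X Xd := by
  have hsub : X ◁ calE X Xd =
      X ◁ ((ε_ X Xd ▷ (Xd ⊗ X)) ≫ (λ_ (Xd ⊗ X)).hom) -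
        X ◁ (((Xd ⊗ X) ◁ ε_ X Xd) ≫ (ρ_ (Xd ⊗ X)).hom) := by
    have hm := Functor.map_sub (F := tensorLeft X)
      (f := (ε_ X Xd ▷ (Xd ⊗ X)) ≫ (λ_ (Xd ⊗ X)).hom)
      (g := ((Xd ⊗ X) ◁ ε_ X Xd) ≫ (ρ_ (Xd ⊗ X)).hom)
    exact hm
  rw [hsub, Preadditive.comp_sub, homotopy_A, homotopy_B]

end PairingPre

end Stmt15Proof

open Stmt15Proof in
/-- In a tensor category, every nonzero object is strongly faithful:
`ev_X` is the cokernel of `ℰ_X`. -/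
theorem stmt15 {k : Type*} [Field k] {C : Type u} [Category.{v} C] [Abelian C]
    [Linear k C] [MonoidalCategory C] [SymmetricCategory C] [MonoidalPreadditive C]
    [MonoidalLinear k C] [RigidCategory C]
    (hEnd : Function.Bijective fun a : k => a • (𝟙 (𝟙_ C)))
    (X Xd : C) [ExactPairing X Xd] (hX : ¬ IsZero X) :
    StronglyFaithful X Xd := by
  -- Notation
  have hzig : η_ X Xd ▷ X ≫ (α_ X Xd X).hom ≫ X ◁ ε_ X Xd = (λ_ X).hom ≫ (ρ_ X).inv :=
    ExactPairing.evaluation_coevaluation X Xd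
  -- Step 1: the evaluation is an epimorphism.
  have hXq : X ◁ cokernel.π (ε_ X Xd) = 0 := by
    have h0 : ε_ X Xd ≫ cokernel.π (ε_ X Xd) = 0 := cokernel.condition _
    have e := congrArg (fun t => (ρ_ X).hom ≫ (λ_ X).inv ≫ η_ X Xd ▷ X ≫ (α_ X Xd X).hom ≫
      X ◁ t) h0
    simp only [MonoidalCategory.whiskerLeft_comp, MonoidalPreadditive.whiskerLeft_zero,
      comp_zero] at e
    rw [ExactPairing.evaluation_coevaluation_assoc] at e
    simpa using e
  haveI : Epi (X ◁ cokernel.π (ε_ X Xd)) := epi_whiskerLeft' X _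
  have hzXQ : IsZero (X ⊗ cokernel (ε_ X Xd)) := by
    rw [IsZero.iff_id_eq_zero]
    apply (cancel_epi (X ◁ cokernel.π (ε_ X Xd))).1
    simp [hXq]
  set Q := cokernel (ε_ X Xd) with hQdef
  obtain ⟨δ, hδ⟩ := hEnd.2 (η_ Q (Qᘁ) ≫ (β_ Q (Qᘁ)).hom ≫ ε_ Q (Qᘁ))
  simp only at hδ
  have hδ0 : δ = 0 := by
    by_contra hne
    apply hX
    rw [IsZero.iff_id_eq_zero]
    have h1 : IsZero ((X ⊗ Q) ⊗ (Qᘁ)) := (tensorRight (Qᘁ)).map_isZero hzXQ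
    have h2 : IsZero (X ⊗ (Q ⊗ Qᘁ)) := h1.of_iso (α_ X Q (Qᘁ)).symm
    have hXd : X ◁ (η_ Q (Qᘁ) ≫ (β_ Q (Qᘁ)).hom ≫ ε_ Q (Qᘁ)) = 0 := by
      rw [MonoidalCategory.whiskerLeft_comp]
      rw [h2.eq_zero_of_tgt (X ◁ η_ Q (Qᘁ))]
      simp
    rw [← hδ] at hXd
    have h3 : δ • 𝟙 (X ⊗ 𝟙_ C) = 0 := by simpa using hXd
    have h4 : δ • 𝟙 X = 0 := by
      have h5 := congrArg (fun t => (ρ_ X).inv ≫ t ≫ (ρ_ X).hom) h3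
      simpa using h5
    calc 𝟙 X = δ⁻¹ • (δ • 𝟙 X) := by rw [smul_smul, inv_mul_cancel₀ hne, one_smul]
      _ = 0 := by rw [h4, smul_zero]
  haveI : Epi (cokernel.π (ε_ X Xd) ▷ Q) := epi_whiskerRight' _ Q
  have hQzero : IsZero Q := by
    rw [IsZero.iff_id_eq_zero]
    have hid := unit_quotient_id_eq (Qd := Qᘁ) (cokernel.π (ε_ X Xd))
    rw [← hδ, hδ0, zero_smul] at hid
    simpa using hid
  haveI hEpi : Epi (ε_ X Xd) := Preadditive.epi_of_isZero_cokernel _ hQzero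
  -- Assemble the cokernel sequence.
  constructor
  · exact calE_comp_evaluation X Xd
  · intro A h hh
    have hκ : kernel.ι (ε_ X Xd) ≫ h = 0 := by
      have hXg : X ◁ (kernel.ι (ε_ X Xd) ≫ h) = 0 := by
        have hid := homotopy_identity X Xd
        have e1 : X ◁ (kernel.ι (ε_ X Xd) ≫ h) =
            (X ◁ kernel.ι (ε_ X Xd)) ≫ (𝟙 (X ⊗ (Xd ⊗ X))) ≫ (X ◁ h) := by
          simp [MonoidalCategory.whiskerLeft_comp]
        rw [e1, ← sub_add_cancel (𝟙 (X ⊗ (Xd ⊗ X))) ((X ◁ ε_ X Xd) ≫ s0 X Xd), ← hid]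
        rw [Preadditive.add_comp, Preadditive.comp_add]
        have t1 : (X ◁ kernel.ι (ε_ X Xd)) ≫ (sigma' X Xd ≫ X ◁ calE X Xd) ≫ X ◁ h = 0 := by
          rw [Category.assoc, ← MonoidalCategory.whiskerLeft_comp, hh]
          simp
        have t2 : (X ◁ kernel.ι (ε_ X Xd)) ≫ ((X ◁ ε_ X Xd) ≫ s0 X Xd) ≫ X ◁ h = 0 := by
          rw [← Category.assoc, ← Category.assoc, ← MonoidalCategory.whiskerLeft_comp,
            kernel.condition]
          simp
        rw [t1, t2, add_zero]
      -- faithfulness of X ⊗ -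
      have h2 : (Xd ⊗ X) ◁ (kernel.ι (ε_ X Xd) ≫ h) = 0 := by
        have h3 : Xd ◁ (X ◁ (kernel.ι (ε_ X Xd) ≫ h)) = 0 := by rw [hXg]; simp
        have h4 := associator_naturality_right Xd X (kernel.ι (ε_ X Xd) ≫ h)
        rw [h3, comp_zero] at h4
        have h5 := congrArg (fun t => t ≫ (α_ Xd X A).inv) h4
        simpa using h5
      have h6 := whisker_exchange (ε_ X Xd) (kernel.ι (ε_ X Xd) ≫ h)
      rw [h2, zero_comp] at h6
      haveI : Epi (ε_ X Xd ▷ (kernel (ε_ X Xd))) := epi_whiskerRight' _ _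
      have h7 : 𝟙_ C ◁ (kernel.ι (ε_ X Xd) ≫ h) = 0 := (cancel_epi _).1 (by rw [← h6]; simp)
      calc kernel.ι (ε_ X Xd) ≫ h
          = (λ_ (kernel (ε_ X Xd))).inv ≫ (𝟙_ C ◁ (kernel.ι (ε_ X Xd) ≫ h)) ≫ (λ_ A).hom :=
            id_whiskerLeft_symm _
        _ = 0 := by rw [h7]; simp
    refine ⟨Abelian.epiDesc (ε_ X Xd) h hκ, Abelian.comp_epiDesc _ h hκ, ?_⟩
    intro y hy
    rw [← cancel_epi (ε_ X Xd), hy, Abelian.comp_epiDesc]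
end
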